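/- arXiv:2011.13599 — 10 statements merged into one kernel-verified Lean document; each statement's English description precedes it below -/
import Mathlib

section
/- Let P and Q be nonempty finite subsets of ℤ and (φ, ψ) a Galois connection between P and Q. Let d ∈ Q with d ≠ min(Q), and let v = max{b ∈ Q : b ≤ d - 1}. Then for any a ∈ P, d = φ(a) if and only if ψ(v) + 1 ≤ a ≤ ψ(d). -/
/-!
By adjunction, `a ≤ ψ d ↔ φ a ≤ d` and `a ≤ ψ v ↔ φ a ≤ v`. Since `φ a ∈ Q` and `v` is the
largest element of `Q` below `d`, `φ a ≤ v ↔ φ a < d`; so `ψ v < a ≤ ψ d` says exactly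
`d ≤ φ a ≤ d`.
-/

section GaloisConnectionOnSubsets

variable {α β : Type*} [LinearOrder α] [LinearOrder β]

theorem le_iff_lt_of_isGreatest_lt {Q : Set β} {d v b : β}
    (hv : IsGreatest {b | b ∈ Q ∧ b < d} v) (hb : b ∈ Q) : b ≤ v ↔ b < d :=
  ⟨fun h => h.trans_lt hv.1.2, fun h => hv.2 ⟨hb, h⟩⟩

theorem eq_iff_lt_and_le_of_isGreatest_lt {P : Set α} {Q : Set β} {φ : α → β} {ψ : β → α}
    (hφmem : ∀ a ∈ P, φ a ∈ Q) (hadj : ∀ a ∈ P, ∀ b ∈ Q, (a ≤ ψ b ↔ φ a ≤ b))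
    {d v : β} (hd : d ∈ Q) (hv : IsGreatest {b | b ∈ Q ∧ b < d} v) {a : α} (ha : a ∈ P) :
    d = φ a ↔ ψ v < a ∧ a ≤ ψ d := by
  have hlower : ψ v < a ↔ d ≤ φ a := by
    rw [lt_iff_not_ge, hadj a ha v hv.1.1, le_iff_lt_of_isGreatest_lt hv (hφmem a ha), not_lt]
  rw [hlower, hadj a ha d hd, eq_comm, le_antisymm_iff, and_comm]

end GaloisConnectionOnSubsets

theorem stmt_1_general (P Q : Finset ℤ)
    (φ ψ : ℤ → ℤ)
    (hφmem : ∀ a ∈ P, φ a ∈ Q)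
    (hadj : ∀ a ∈ P, ∀ b ∈ Q, (a ≤ ψ b ↔ φ a ≤ b))
    (d : ℤ) (hd : d ∈ Q)
    (v : ℤ) (hv : IsGreatest {b | b ∈ Q ∧ b ≤ d - 1} v) :
    ∀ a ∈ P, (d = φ a ↔ ψ v + 1 ≤ a ∧ a ≤ ψ d) := by
  intro a ha
  simp_rw [Int.le_sub_one_iff] at hv
  rw [Int.add_one_le_iff]
  exact eq_iff_lt_and_le_of_isGreatest_lt hφmem hadj hd hv ha

/-- Let `(φ, ψ)` be a Galois connection between nonempty finite subsets `P`, `Q`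
of `ℤ`.  Let `d ∈ Q` with `d ≠ min Q`, and let `v` be the maximum of
`{b ∈ Q : b ≤ d - 1}`.  Then for any `a ∈ P`, `d = φ a ↔ ψ v + 1 ≤ a ≤ ψ d`. -/
theorem stmt_1 (P Q : Finset ℤ) (hP : P.Nonempty) (hQ : Q.Nonempty)
    (φ ψ : ℤ → ℤ)
    (hφmem : ∀ a ∈ P, φ a ∈ Q) (hψmem : ∀ b ∈ Q, ψ b ∈ P)
    (hφmono : ∀ a ∈ P, ∀ a' ∈ P, a ≤ a' → φ a ≤ φ a')
    (hψmono : ∀ b ∈ Q, ∀ b' ∈ Q, b ≤ b' → ψ b ≤ ψ b')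
    (hadj : ∀ a ∈ P, ∀ b ∈ Q, (a ≤ ψ b ↔ φ a ≤ b))
    (d : ℤ) (hd : d ∈ Q) (hdmin : d ≠ Q.min' hQ)
    (v : ℤ) (hv : IsGreatest {b | b ∈ Q ∧ b ≤ d - 1} v) :
    ∀ a ∈ P, (d = φ a ↔ ψ v + 1 ≤ a ∧ a ≤ ψ d) :=
  stmt_1_general P Q φ ψ hφmem hadj d hd v hv
end

section
/- Let C be a k-dimensional linear code of length m over a field 𝔽. Define φ: [0,k] → [0,m] by φ(r) = d_r(C), the r-th generalized Hamming weight, and ψ: [0,m] → [0,k] by ψ(l) = K_l(C), the l-th dimension/length profile. Then (φ, ψ) is a Galois connection between [0,k] and [0,m]. -/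
/-- The submodule `δ(J)` of vectors supported inside `J`. -/
def deltaCode (𝔽 : Type*) [Field 𝔽] (m : ℕ) (J : Finset (Fin m)) :
    Submodule 𝔽 (Fin m → 𝔽) :=
  Submodule.pi {i | i ∉ J} (fun _ => ⊥)

/-- The `r`-th generalized Hamming weight of a linear code `C ⊆ 𝔽^m`:
`d_r(C) = min {|J| : r ≤ dim (C ∩ δ(J))}`. -/
noncomputable def GHW (𝔽 : Type*) [Field 𝔽] (m : ℕ) (C : Submodule 𝔽 (Fin m → 𝔽))
    (r : ℕ) : ℕ :=
  sInf {n | ∃ J : Finset (Fin m), J.card = n ∧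
    r ≤ Module.finrank 𝔽 ↥(C ⊓ deltaCode 𝔽 m J)}

/-- The `l`-th dimension/length profile of a linear code `C ⊆ 𝔽^m`:
`K_l(C) = max {dim (C ∩ δ(J)) : |J| = l}`. -/
noncomputable def DLP (𝔽 : Type*) [Field 𝔽] (m : ℕ) (C : Submodule 𝔽 (Fin m → 𝔽))
    (l : ℕ) : ℕ :=
  sSup {d | ∃ J : Finset (Fin m), J.card = l ∧
    Module.finrank 𝔽 ↥(C ⊓ deltaCode 𝔽 m J) = d}

/-!
Both `d_r` and `K_l` are governed by the same relation "some `J` with `|J| ≤ l` carries an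
`r`-dimensional subcode": since `J ↦ dim (C ∩ δ(J))` is monotone and any `J` extends to a
superset of any size up to `m`, `|J| ≤ l` may be replaced by `|J| = l`. Reading this relation
through the minimum gives `d_r ≤ l`, through the maximum gives `r ≤ K_l`.
-/

section

variable {𝔽 : Type*} [Field 𝔽] {m : ℕ}

lemma deltaCode_mono {J J' : Finset (Fin m)} (h : J ⊆ J') :
    deltaCode 𝔽 m J ≤ deltaCode 𝔽 m J' :=
  fun _ hx i hi => hx i fun hiJ => hi (h hiJ)

lemma deltaCode_univ : deltaCode 𝔽 m Finset.univ = ⊤ := by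
  ext x
  simp [deltaCode]

variable (C : Submodule 𝔽 (Fin m → 𝔽))

lemma finrank_inf_deltaCode_mono {J J' : Finset (Fin m)} (h : J ⊆ J') :
    Module.finrank 𝔽 ↥(C ⊓ deltaCode 𝔽 m J) ≤ Module.finrank 𝔽 ↥(C ⊓ deltaCode 𝔽 m J') :=
  Submodule.finrank_mono (inf_le_inf_left C (deltaCode_mono h))

lemma finrank_inf_deltaCode_univ :
    Module.finrank 𝔽 ↥(C ⊓ deltaCode 𝔽 m Finset.univ) = Module.finrank 𝔽 C := by
  rw [deltaCode_univ, inf_top_eq]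

lemma exists_card_eq_of_card_le {J : Finset (Fin m)} {r l : ℕ}
    (hr : r ≤ Module.finrank 𝔽 ↥(C ⊓ deltaCode 𝔽 m J)) (hJ : J.card ≤ l) (hl : l ≤ m) :
    ∃ J' : Finset (Fin m), J'.card = l ∧ r ≤ Module.finrank 𝔽 ↥(C ⊓ deltaCode 𝔽 m J') := by
  obtain ⟨J', hJJ', hJ'⟩ := Finset.exists_superset_card_eq hJ (by simpa using hl)
  exact ⟨J', hJ', hr.trans (finrank_inf_deltaCode_mono C hJJ')⟩

lemma GHW_le_card {J : Finset (Fin m)} {r : ℕ}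
    (hr : r ≤ Module.finrank 𝔽 ↥(C ⊓ deltaCode 𝔽 m J)) : GHW 𝔽 m C r ≤ J.card :=
  Nat.sInf_le ⟨J, rfl, hr⟩

lemma exists_card_eq_GHW {r : ℕ} (hr : r ≤ Module.finrank 𝔽 C) :
    ∃ J : Finset (Fin m), J.card = GHW 𝔽 m C r ∧
      r ≤ Module.finrank 𝔽 ↥(C ⊓ deltaCode 𝔽 m J) :=
  Nat.sInf_mem (s := {n | ∃ J : Finset (Fin m), J.card = n ∧
    r ≤ Module.finrank 𝔽 ↥(C ⊓ deltaCode 𝔽 m J)})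
    ⟨_, Finset.univ, rfl, hr.trans (finrank_inf_deltaCode_univ C).ge⟩

lemma GHW_le_length {r : ℕ} (hr : r ≤ Module.finrank 𝔽 C) : GHW 𝔽 m C r ≤ m := by
  simpa using GHW_le_card C (hr.trans (finrank_inf_deltaCode_univ C).ge)

lemma GHW_mono {r r' : ℕ} (h : r ≤ r') (hr' : r' ≤ Module.finrank 𝔽 C) :
    GHW 𝔽 m C r ≤ GHW 𝔽 m C r' := by
  obtain ⟨J, hJ, hr'J⟩ := exists_card_eq_GHW C hr'
  exact hJ ▸ GHW_le_card C (h.trans hr'J)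

lemma bddAbove_finrank_inf_deltaCode (l : ℕ) :
    BddAbove {d | ∃ J : Finset (Fin m), J.card = l ∧
      Module.finrank 𝔽 ↥(C ⊓ deltaCode 𝔽 m J) = d} :=
  ⟨Module.finrank 𝔽 C, by rintro _ ⟨J, -, rfl⟩; exact Submodule.finrank_mono inf_le_left⟩

lemma finrank_inf_deltaCode_le_DLP (J : Finset (Fin m)) :
    Module.finrank 𝔽 ↥(C ⊓ deltaCode 𝔽 m J) ≤ DLP 𝔽 m C J.card :=
  le_csSup (bddAbove_finrank_inf_deltaCode C _) ⟨J, rfl, rfl⟩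

lemma exists_card_eq_finrank_eq_DLP {l : ℕ} (hl : l ≤ m) :
    ∃ J : Finset (Fin m), J.card = l ∧
      Module.finrank 𝔽 ↥(C ⊓ deltaCode 𝔽 m J) = DLP 𝔽 m C l := by
  obtain ⟨J, -, hJ⟩ :=
    Finset.exists_subset_card_eq (s := (Finset.univ : Finset (Fin m))) (by simpa using hl)
  exact Nat.sSup_mem (s := {d | ∃ J : Finset (Fin m), J.card = l ∧
    Module.finrank 𝔽 ↥(C ⊓ deltaCode 𝔽 m J) = d}) ⟨_, J, hJ, rfl⟩
    (bddAbove_finrank_inf_deltaCode C l)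

lemma DLP_le_finrank {l : ℕ} (hl : l ≤ m) : DLP 𝔽 m C l ≤ Module.finrank 𝔽 C := by
  obtain ⟨J, -, hJ⟩ := exists_card_eq_finrank_eq_DLP C hl
  exact hJ ▸ Submodule.finrank_mono inf_le_left

lemma le_DLP_iff {r l : ℕ} (hl : l ≤ m) :
    r ≤ DLP 𝔽 m C l ↔
      ∃ J : Finset (Fin m), J.card = l ∧ r ≤ Module.finrank 𝔽 ↥(C ⊓ deltaCode 𝔽 m J) := by
  refine ⟨fun h => ?_, fun ⟨J, hJ, hr⟩ => hJ ▸ hr.trans (finrank_inf_deltaCode_le_DLP C J)⟩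
  obtain ⟨J, hJ, hJmax⟩ := exists_card_eq_finrank_eq_DLP C hl
  exact ⟨J, hJ, hJmax ▸ h⟩

lemma GHW_le_iff {r l : ℕ} (hr : r ≤ Module.finrank 𝔽 C) (hl : l ≤ m) :
    GHW 𝔽 m C r ≤ l ↔
      ∃ J : Finset (Fin m), J.card = l ∧ r ≤ Module.finrank 𝔽 ↥(C ⊓ deltaCode 𝔽 m J) := by
  refine ⟨fun h => ?_, fun ⟨J, hJ, hrJ⟩ => hJ ▸ GHW_le_card C hrJ⟩
  obtain ⟨J, hJ, hrJ⟩ := exists_card_eq_GHW C hr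
  exact exists_card_eq_of_card_le C hrJ (hJ ▸ h) hl

lemma le_DLP_iff_GHW_le {r l : ℕ} (hr : r ≤ Module.finrank 𝔽 C) (hl : l ≤ m) :
    r ≤ DLP 𝔽 m C l ↔ GHW 𝔽 m C r ≤ l := by
  rw [le_DLP_iff C hl, GHW_le_iff C hr hl]

lemma DLP_mono {l l' : ℕ} (h : l ≤ l') (hl' : l' ≤ m) : DLP 𝔽 m C l ≤ DLP 𝔽 m C l' := by
  have hl := h.trans hl'
  rw [le_DLP_iff_GHW_le C (DLP_le_finrank C hl) hl']
  exact ((le_DLP_iff_GHW_le C (DLP_le_finrank C hl) hl).mp le_rfl).trans h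

end

/-- For a `k`-dimensional linear code `C` of length `m` over a field `𝔽`, the
maps `r ↦ d_r(C)` and `l ↦ K_l(C)` form a Galois connection between `[0,k]`
and `[0,m]`. -/
theorem stmt_4 (𝔽 : Type*) [Field 𝔽] (m k : ℕ)
    (C : Submodule 𝔽 (Fin m → 𝔽)) (hk : Module.finrank 𝔽 C = k) :
    (∀ r ≤ k, GHW 𝔽 m C r ≤ m) ∧
    (∀ l ≤ m, DLP 𝔽 m C l ≤ k) ∧
    (∀ r r' : ℕ, r ≤ r' → r' ≤ k → GHW 𝔽 m C r ≤ GHW 𝔽 m C r') ∧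
    (∀ l l' : ℕ, l ≤ l' → l' ≤ m → DLP 𝔽 m C l ≤ DLP 𝔽 m C l') ∧
    (∀ r ≤ k, ∀ l ≤ m, (r ≤ DLP 𝔽 m C l ↔ GHW 𝔽 m C r ≤ l)) := by
  subst hk
  exact ⟨fun _ hr => GHW_le_length C hr, fun _ hl => DLP_le_finrank C hl,
    fun _ _ h hr' => GHW_mono C h hr', fun _ _ h hl' => DLP_mono C h hl',
    fun _ hr _ hl => le_DLP_iff_GHW_le C hr hl⟩
end

section
/- Let k, m ∈ ℕ, w ∈ ℤ⁺, and let (φ, ψ) be a Galois connection between [0,k] and [0,m] with ψ(0) = 0 and ψ(l) - ψ(l-1) ≤ w for all l ∈ [1,m]. Define η(l) = ψ(m-l) + wl - k, and define τ: [0, wm-k] → [0,m] by τ(a) = min{b ∈ [0,m] : a ≤ η(b)}. Then (τ, η) is a Galois connection between [0, wm-k] and [0,m], and for any u ∈ [0,k], v ∈ [0, wm-k] with φ(u) + τ(v) = m + 1, it holds that u ≢ v + k (mod w). -/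
/-!
Since `ψ` grows by at most `w` per step, `η` is monotone, and `τ` is by construction its lower
adjoint. If `φ u = p` and `τ v = m + 1 - p`, the two adjunctions bracket `u` in
`(ψ (p - 1), ψ p]` and `v + k - w (m - p)` in `(ψ p, ψ (p - 1) + w]`, so their difference lies
strictly between `0` and `w` and cannot be divisible by `w`.
-/

/-- A Galois connection between the integer intervals `[0,k]` and `[0,m]`. -/
def IsGC (k m : ℤ) (φ ψ : ℤ → ℤ) : Prop :=
  (∀ a, 0 ≤ a → a ≤ k → 0 ≤ φ a ∧ φ a ≤ m) ∧
  (∀ b, 0 ≤ b → b ≤ m → 0 ≤ ψ b ∧ ψ b ≤ k) ∧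
  (∀ a a', 0 ≤ a → a ≤ a' → a' ≤ k → φ a ≤ φ a') ∧
  (∀ b b', 0 ≤ b → b ≤ b' → b' ≤ m → ψ b ≤ ψ b') ∧
  (∀ a b, 0 ≤ a → a ≤ k → 0 ≤ b → b ≤ m → (a ≤ ψ b ↔ φ a ≤ b))

theorem IsGC.right_top_eq {k m : ℤ} {φ ψ : ℤ → ℤ} (h : IsGC k m φ ψ) (hk : 0 ≤ k)
    (hm : 0 ≤ m) : ψ m = k :=
  le_antisymm (h.2.1 m hm le_rfl).2 ((h.2.2.2.2 k m hk le_rfl hm le_rfl).2 (h.1 k hk le_rfl).2)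

theorem IsGC.right_pred_lt_le {k m : ℤ} {φ ψ : ℤ → ℤ} (h : IsGC k m φ ψ) {a : ℤ}
    (ha₀ : 0 ≤ a) (ha₁ : a ≤ k) (hpos : 1 ≤ φ a) :
    ψ (φ a - 1) < a ∧ a ≤ ψ (φ a) := by
  have hφm := (h.1 a ha₀ ha₁).2
  refine ⟨?_, (h.2.2.2.2 a (φ a) ha₀ ha₁ (by omega) hφm).2 le_rfl⟩
  by_contra! hle
  have := (h.2.2.2.2 a (φ a - 1) ha₀ ha₁ (by omega) (by omega)).1 hle
  omega

theorem isGC_of_isLeast {n m : ℤ} {τ η : ℤ → ℤ}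
    (hηmap : ∀ b, 0 ≤ b → b ≤ m → 0 ≤ η b ∧ η b ≤ n)
    (hηmono : ∀ b b', 0 ≤ b → b ≤ b' → b' ≤ m → η b ≤ η b')
    (hτ : ∀ a, 0 ≤ a → a ≤ n → IsLeast {b | 0 ≤ b ∧ b ≤ m ∧ a ≤ η b} (τ a)) :
    IsGC n m τ η := by
  have hadj : ∀ a b, 0 ≤ a → a ≤ n → 0 ≤ b → b ≤ m → (a ≤ η b ↔ τ a ≤ b) := by
    intro a b ha₀ ha₁ hb₀ hb₁
    obtain ⟨⟨hτ₀, -, haη⟩, hleast⟩ := hτ a ha₀ ha₁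
    exact ⟨fun hab => hleast ⟨hb₀, hb₁, hab⟩,
      fun hτb => haη.trans (hηmono _ b hτ₀ hτb hb₁)⟩
  refine ⟨fun a ha₀ ha₁ => ⟨(hτ a ha₀ ha₁).1.1, (hτ a ha₀ ha₁).1.2.1⟩, hηmap, ?_, hηmono, hadj⟩
  intro a a' ha₀ haa' ha'₁
  obtain ⟨hτ₀, hτ₁, ha'η⟩ := (hτ a' (ha₀.trans haa') ha'₁).1
  exact (hadj a (τ a') ha₀ (haa'.trans ha'₁) hτ₀ hτ₁).1 (haa'.trans ha'η)

theorem le_add_mul_sub_of_step_le {f : ℤ → ℤ} {w m : ℤ}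
    (hstep : ∀ l, 1 ≤ l → l ≤ m → f l - f (l - 1) ≤ w) {a b : ℤ}
    (ha : 0 ≤ a) (hab : a ≤ b) (hb : b ≤ m) :
    f b ≤ f a + w * (b - a) := by
  induction b, hab using Int.leInduction with
  | base => simp
  | succ b hab ih =>
    have := hstep (b + 1) (by omega) hb
    rw [add_sub_cancel_right] at this
    linarith [ih (by omega)]

theorem Int.not_modEq_of_pos_of_lt {a b c w : ℤ} (hpos : 0 < b - w * c - a)
    (hlt : b - w * c - a < w) : ¬ a ≡ b [ZMOD w] := by
  intro hmod
  have hdvd : w ∣ b - w * c - a := by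
    rw [sub_right_comm]
    exact dvd_sub (Int.modEq_iff_dvd.1 hmod) (dvd_mul_right w c)
  have := Int.eq_zero_of_dvd_of_nonneg_of_lt hpos.le hlt hdvd
  omega

theorem stmt_6_general (k m w : ℤ) (hk : 0 ≤ k) (hm : 0 ≤ m)
    (φ ψ : ℤ → ℤ) (hgc : IsGC k m φ ψ) (hψ0 : ψ 0 = 0)
    (hstep : ∀ l, 1 ≤ l → l ≤ m → ψ l - ψ (l - 1) ≤ w)
    (η : ℤ → ℤ) (hη : ∀ l, η l = ψ (m - l) + w * l - k)
    (τ : ℤ → ℤ)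
    (hτ : ∀ a, 0 ≤ a → a ≤ w * m - k →
      IsLeast {b | 0 ≤ b ∧ b ≤ m ∧ a ≤ η b} (τ a)) :
    IsGC (w * m - k) m τ η ∧
    ∀ u v, 0 ≤ u → u ≤ k → 0 ≤ v → v ≤ w * m - k →
      φ u + τ v = m + 1 → ¬ (u ≡ v + k [ZMOD w]) := by
  have hψm := hgc.right_top_eq hk hm
  have hηmono : ∀ b b', 0 ≤ b → b ≤ b' → b' ≤ m → η b ≤ η b' := by
    intro b b' hb hbb' hb'
    have := le_add_mul_sub_of_step_le hstep (a := m - b') (b := m - b)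
      (by omega) (by omega) (by omega)
    rw [hη, hη]
    linear_combination this
  have hηmap : ∀ b, 0 ≤ b → b ≤ m → 0 ≤ η b ∧ η b ≤ w * m - k :=
    fun b hb₀ hb₁ =>
      ⟨by simpa [hη, hψm] using hηmono 0 b le_rfl hb₀ hb₁,
        by simpa [hη, hψ0] using hηmono b m hb₀ hb₁ le_rfl⟩
  have hτη := isGC_of_isLeast hηmap hηmono hτ
  refine ⟨hτη, fun u v hu₀ hu₁ hv₀ hv₁ hsum => ?_⟩
  have hp := hgc.1 u hu₀ hu₁
  have hq := hτη.1 v hv₀ hv₁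
  obtain ⟨hψlt, hψle⟩ := hgc.right_pred_lt_le hu₀ hu₁ (by omega)
  obtain ⟨hηlt, hηle⟩ := hτη.right_pred_lt_le hv₀ hv₁ (by omega)
  have hτv : τ v = m + 1 - φ u := by omega
  rw [hη, hτv, show m - (m + 1 - φ u - 1) = φ u by ring] at hηlt
  rw [hη, hτv, show m - (m + 1 - φ u) = φ u - 1 by ring] at hηle
  have hψstep := hstep (φ u) (by omega) hp.2
  exact Int.not_modEq_of_pos_of_lt (c := m - φ u) (by linarith) (by linarith)

/-- Lemma 2.3(3): with `η l = ψ (m - l) + w l - k` and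
`τ a = min {b ∈ [0,m] : a ≤ η b}`, the pair `(τ, η)` is a Galois connection
between `[0, wm - k]` and `[0,m]`, and whenever `φ u + τ v = m + 1` with
`u ∈ [0,k]`, `v ∈ [0, wm-k]`, one has `u ≢ v + k (mod w)`. -/
theorem stmt_6 (k m w : ℤ) (hk : 0 ≤ k) (hm : 0 ≤ m) (hw : 1 ≤ w)
    (φ ψ : ℤ → ℤ) (hgc : IsGC k m φ ψ) (hψ0 : ψ 0 = 0)
    (hstep : ∀ l, 1 ≤ l → l ≤ m → ψ l - ψ (l - 1) ≤ w)
    (η : ℤ → ℤ) (hη : ∀ l, η l = ψ (m - l) + w * l - k)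
    (τ : ℤ → ℤ)
    (hτ : ∀ a, 0 ≤ a → a ≤ w * m - k →
      IsLeast {b | 0 ≤ b ∧ b ≤ m ∧ a ≤ η b} (τ a)) :
    IsGC (w * m - k) m τ η ∧
    ∀ u v, 0 ≤ u → u ≤ k → 0 ≤ v → v ≤ w * m - k →
      φ u + τ v = m + 1 → ¬ (u ≡ v + k [ZMOD w]) :=
  stmt_6_general k m w hk hm φ ψ hgc hψ0 hstep η hη τ hτ
end

section
/- Let k, m ∈ ℕ, w ∈ ℤ⁺, and (φ, ψ) a Galois connection between [0,k] and [0,m]. Then the following are equivalent: (1) ψ(l) - ψ(l-1) ≤ w for all l ∈ [1,m]; (2) |φ⁻¹({l})| ≤ w for all l ∈ [1,m]; (3) φ(r) + 1 ≤ max{φ(r+w), 1} for all r ∈ [0, k-w]. -/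
namespace IsGC

variable {k m : ℤ} {φ ψ : ℤ → ℤ}

theorem phi_nonneg (h : IsGC k m φ ψ) {a : ℤ} (ha : 0 ≤ a) (hak : a ≤ k) : 0 ≤ φ a :=
  (h.1 a ha hak).1

theorem phi_le (h : IsGC k m φ ψ) {a : ℤ} (ha : 0 ≤ a) (hak : a ≤ k) : φ a ≤ m :=
  (h.1 a ha hak).2

theorem psi_nonneg (h : IsGC k m φ ψ) {b : ℤ} (hb : 0 ≤ b) (hbm : b ≤ m) : 0 ≤ ψ b :=
  (h.2.1 b hb hbm).1

theorem psi_le (h : IsGC k m φ ψ) {b : ℤ} (hb : 0 ≤ b) (hbm : b ≤ m) : ψ b ≤ k :=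
  (h.2.1 b hb hbm).2

theorem psi_mono (h : IsGC k m φ ψ) {b b' : ℤ} (hb : 0 ≤ b) (hbb' : b ≤ b') (hb'm : b' ≤ m) :
    ψ b ≤ ψ b' :=
  h.2.2.2.1 b b' hb hbb' hb'm

theorem le_psi_iff (h : IsGC k m φ ψ) {a b : ℤ} (ha : 0 ≤ a) (hak : a ≤ k) (hb : 0 ≤ b)
    (hbm : b ≤ m) : a ≤ ψ b ↔ φ a ≤ b :=
  h.2.2.2.2 a b ha hak hb hbm

theorem phi_eq_iff (h : IsGC k m φ ψ) {a l : ℤ} (ha : 0 ≤ a) (hak : a ≤ k) (hl : 1 ≤ l)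
    (hlm : l ≤ m) : φ a = l ↔ ψ (l - 1) < a ∧ a ≤ ψ l := by
  rw [← not_le, h.le_psi_iff ha hak (by omega) (by omega), h.le_psi_iff ha hak (by omega) hlm]
  omega

theorem filter_phi_eq (h : IsGC k m φ ψ) {l : ℤ} (hl : 1 ≤ l) (hlm : l ≤ m) :
    (Finset.Icc 0 k).filter (fun a => φ a = l) = Finset.Ioc (ψ (l - 1)) (ψ l) := by
  have h₀ := h.psi_nonneg (b := l - 1) (by omega) (by omega)
  have hk := h.psi_le (b := l) (by omega) hlm
  ext a
  simp only [Finset.mem_filter, Finset.mem_Icc, Finset.mem_Ioc]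
  constructor
  · rintro ⟨⟨ha, hak⟩, hφa⟩
    exact (h.phi_eq_iff ha hak hl hlm).1 hφa
  · rintro ⟨hlt, hle⟩
    exact ⟨⟨by omega, by omega⟩, (h.phi_eq_iff (by omega) (by omega) hl hlm).2 ⟨hlt, hle⟩⟩

theorem card_filter_phi_eq (h : IsGC k m φ ψ) {l : ℤ} (hl : 1 ≤ l) (hlm : l ≤ m) :
    (((Finset.Icc 0 k).filter (fun a => φ a = l)).card : ℤ) = ψ l - ψ (l - 1) := by
  rw [h.filter_phi_eq hl hlm, Int.card_Ioc]
  have := h.psi_mono (b := l - 1) (by omega) (by omega) hlm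
  omega

theorem phi_add_one_le_of_psi_sub_le (h : IsGC k m φ ψ) {w : ℤ} (hw : 0 ≤ w)
    (H : ∀ l, 1 ≤ l → l ≤ m → ψ l - ψ (l - 1) ≤ w) {r : ℤ} (hr : 0 ≤ r) (hrk : r ≤ k - w) :
    φ r + 1 ≤ max (φ (r + w)) 1 := by
  have hφrm := h.phi_le hr (by omega)
  rcases (h.phi_nonneg hr (by omega)).eq_or_lt with hφr | hφr
  · rw [← hφr]
    exact le_max_right _ _
  have hψ := ((h.phi_eq_iff hr (by omega) hφr hφrm).1 rfl).1
  have hlt : ¬ r + w ≤ ψ (φ r) := by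
    have := H (φ r) hφr hφrm
    omega
  rw [h.le_psi_iff (by omega) (by omega) (by omega) hφrm] at hlt
  exact le_max_of_le_left (by omega)

theorem psi_sub_le_of_phi_add_one_le (h : IsGC k m φ ψ) {w : ℤ} (hw : 0 ≤ w)
    (H : ∀ r, 0 ≤ r → r ≤ k - w → φ r + 1 ≤ max (φ (r + w)) 1) {l : ℤ} (hl : 1 ≤ l)
    (hlm : l ≤ m) : ψ l - ψ (l - 1) ≤ w := by
  by_contra! hgt
  have h₀ := h.psi_nonneg (b := l - 1) (by omega) (by omega)
  have hk := h.psi_le (b := l) (by omega) hlm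
  set r := ψ (l - 1) + 1
  have hφr : ¬ φ r ≤ l - 1 := by
    rw [← h.le_psi_iff (by omega) (by omega) (by omega) (by omega)]
    omega
  have hφrw : φ (r + w) ≤ l := (h.le_psi_iff (by omega) (by omega) (by omega) hlm).1 (by omega)
  have := (H r (by omega) (by omega)).trans (max_le hφrw hl)
  omega

end IsGC

theorem stmt_7_general (k m w : ℤ) (hw : 1 ≤ w)
    (φ ψ : ℤ → ℤ) (hgc : IsGC k m φ ψ) :
    ((∀ l, 1 ≤ l → l ≤ m → ψ l - ψ (l - 1) ≤ w) ↔
      (∀ l, 1 ≤ l → l ≤ m →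
        (((Finset.Icc (0 : ℤ) k).filter (fun a => φ a = l)).card : ℤ) ≤ w)) ∧
    ((∀ l, 1 ≤ l → l ≤ m → ψ l - ψ (l - 1) ≤ w) ↔
      (∀ r, 0 ≤ r → r ≤ k - w → φ r + 1 ≤ max (φ (r + w)) 1)) := by
  refine ⟨forall₃_congr fun l hl hlm => by rw [hgc.card_filter_phi_eq hl hlm], ?_, ?_⟩
  · exact fun H r hr hrk => hgc.phi_add_one_le_of_psi_sub_le (by omega) H hr hrk
  · exact fun H l hl hlm => hgc.psi_sub_le_of_phi_add_one_le (by omega) H hl hlm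

/-- Proposition 2.1: for a Galois connection `(φ,ψ)` between `[0,k]` and
`[0,m]` the following are equivalent: (1) `ψ l - ψ (l-1) ≤ w` for all
`l ∈ [1,m]`; (2) `|φ⁻¹({l})| ≤ w` for all `l ∈ [1,m]` (preimage within the
domain `[0,k]`); (3) `φ r + 1 ≤ max (φ (r+w)) 1` for all `r ∈ [0, k-w]`. -/
theorem stmt_7 (k m w : ℤ) (hk : 0 ≤ k) (hm : 0 ≤ m) (hw : 1 ≤ w)
    (φ ψ : ℤ → ℤ) (hgc : IsGC k m φ ψ) :
    ((∀ l, 1 ≤ l → l ≤ m → ψ l - ψ (l - 1) ≤ w) ↔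
      (∀ l, 1 ≤ l → l ≤ m →
        (((Finset.Icc (0 : ℤ) k).filter (fun a => φ a = l)).card : ℤ) ≤ w)) ∧
    ((∀ l, 1 ≤ l → l ≤ m → ψ l - ψ (l - 1) ≤ w) ↔
      (∀ r, 0 ≤ r → r ≤ k - w → φ r + 1 ≤ max (φ (r + w)) 1)) :=
  stmt_7_general k m w hw φ ψ hgc
end

section
/- Let k, m ∈ ℕ, w ∈ ℤ⁺, and (φ, ψ) a Galois connection between [0,k] and [0,m] with ψ(0) = 0. If ψ(l) - ψ(l-1) ≤ w for all l ∈ [1,m], then φ(a) ∈ [1,m] for all a ∈ [1,k], and φ(r) + 1 ≤ φ(r+w) for all r ∈ [0, k-w]. -/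
/-! The lower adjoint `φ` can only stall where `ψ` jumps: `ψ (φ r - 1) < r ≤ ψ (φ r)`, so if the
jumps of `ψ` are at most `w`, then `ψ (φ r) < r + w`, and adjunction forbids `φ (r + w) ≤ φ r`. -/

namespace IsGC

variable {k m : ℤ} {φ ψ : ℤ → ℤ}

theorem phi_mem (h : IsGC k m φ ψ) {a : ℤ} (ha : 0 ≤ a) (hak : a ≤ k) : 0 ≤ φ a ∧ φ a ≤ m :=
  h.1 a ha hak

theorem one_le_phi (h : IsGC k m φ ψ) (hm : 0 ≤ m) (hψ0 : ψ 0 = 0) {a : ℤ} (ha : 1 ≤ a)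
    (hak : a ≤ k) : 1 ≤ φ a := by
  by_contra! hφa
  have := (h.le_psi_iff (by omega) hak le_rfl hm).mpr (by omega)
  omega

theorem psi_phi_sub_one_lt (h : IsGC k m φ ψ) {r : ℤ} (hr : 0 ≤ r) (hrk : r ≤ k)
    (hφr : 1 ≤ φ r) : ψ (φ r - 1) < r := by
  by_contra! hle
  have := (h.le_psi_iff hr hrk (by omega) (by linarith [(h.phi_mem hr hrk).2])).mp hle
  omega

theorem psi_phi_lt_add (h : IsGC k m φ ψ) (hψ0 : ψ 0 = 0) {w : ℤ} (hw : 1 ≤ w)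
    (hstep : ∀ l, 1 ≤ l → l ≤ m → ψ l - ψ (l - 1) ≤ w) {r : ℤ} (hr : 0 ≤ r) (hrk : r ≤ k) :
    ψ (φ r) < r + w := by
  rcases (h.phi_mem hr hrk).1.eq_or_lt with hφr | hφr
  · rw [← hφr, hψ0]
    omega
  · have := hstep (φ r) hφr (h.phi_mem hr hrk).2
    have := h.psi_phi_sub_one_lt hr hrk hφr
    omega

end IsGC

theorem stmt_8_general (k m w : ℤ) (hm : 0 ≤ m) (hw : 1 ≤ w)
    (φ ψ : ℤ → ℤ) (hgc : IsGC k m φ ψ) (hψ0 : ψ 0 = 0)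
    (hstep : ∀ l, 1 ≤ l → l ≤ m → ψ l - ψ (l - 1) ≤ w) :
    (∀ a, 1 ≤ a → a ≤ k → 1 ≤ φ a ∧ φ a ≤ m) ∧
    (∀ r, 0 ≤ r → r ≤ k - w → φ r + 1 ≤ φ (r + w)) := by
  refine ⟨fun a ha hak => ⟨hgc.one_le_phi hm hψ0 ha hak, (hgc.phi_mem (by omega) hak).2⟩, ?_⟩
  intro r hr hrk
  by_contra! hstall
  have hφr := hgc.phi_mem hr (by omega)
  have := (hgc.le_psi_iff (a := r + w) (by omega) (by omega) hφr.1 hφr.2).mpr (by omega)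
  have := hgc.psi_phi_lt_add hψ0 hw hstep hr (by omega)
  omega

/-- If `(φ, ψ)` is a Galois connection between `[0,k]` and `[0,m]` with
`ψ 0 = 0` and `ψ l - ψ (l-1) ≤ w` for all `l ∈ [1,m]`, then `φ a ∈ [1,m]`
for all `a ∈ [1,k]`, and `φ r + 1 ≤ φ (r+w)` for all `r ∈ [0, k-w]`. -/
theorem stmt_8 (k m w : ℤ) (hk : 0 ≤ k) (hm : 0 ≤ m) (hw : 1 ≤ w)
    (φ ψ : ℤ → ℤ) (hgc : IsGC k m φ ψ) (hψ0 : ψ 0 = 0)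
    (hstep : ∀ l, 1 ≤ l → l ≤ m → ψ l - ψ (l - 1) ≤ w) :
    (∀ a, 1 ≤ a → a ≤ k → 1 ≤ φ a ∧ φ a ≤ m) ∧
    (∀ r, 0 ≤ r → r ≤ k - w → φ r + 1 ≤ φ (r + w)) :=
  stmt_8_general k m w hm hw φ ψ hgc hψ0 hstep
end

section
/- Let k, m ∈ ℕ, w ∈ ℤ⁺. Let (φ, ψ) be a Galois connection between [0,k] and [0,m] with ψ(0) = 0 and ψ(l) - ψ(l-1) ≤ w for all l ∈ [1,m]. Let (τ, η) be a Galois connection between [0, wm-k] and [0,m]. For γ ∈ ℤ, set A_γ = {φ(u) : u ∈ [1,k], u ≡ γ + k (mod w)} and B_γ = {m + 1 - τ(v) : v ∈ [1, wm-k], v ≡ γ (mod w)}. Then the following are equivalent: (1) η(l) = ψ(m-l) + wl - k for all l ∈ [0,m]; (2) for every γ ∈ ℤ, A_γ ∩ B_γ = ∅ and A_γ ∪ B_γ = [1,m]; (3) for every γ ∈ ℤ, A_γ ∪ B_γ = [1,m]. -/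
/-- `A_γ = {φ u : u ∈ [1,k], u ≡ γ + k (mod w)}`. -/
def Aset (k w : ℤ) (φ : ℤ → ℤ) (γ : ℤ) : Set ℤ :=
  {x | ∃ u, 1 ≤ u ∧ u ≤ k ∧ u ≡ γ + k [ZMOD w] ∧ φ u = x}

/-- `B_γ = {m + 1 - τ v : v ∈ [1, wm-k], v ≡ γ (mod w)}`. -/
def Bset (k m w : ℤ) (τ : ℤ → ℤ) (γ : ℤ) : Set ℤ :=
  {x | ∃ v, 1 ≤ v ∧ v ≤ w * m - k ∧ v ≡ γ [ZMOD w] ∧ m + 1 - τ v = x}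


/-!
For `1 ≤ l ≤ m`, the Galois connections give `l ∈ A_γ` exactly when the window
`(ψ (l-1), ψ l]` contains an integer `≡ γ + k (mod w)`, and `l ∈ B_γ` exactly when the window
`(η (m-l), η (m-l+1)]` contains an integer `≡ γ`.

Under the duality formula the second window, translated by `k - w (m-l)`, is
`(ψ l, ψ (l-1) + w]`: the two windows tile an interval of length `w`, which meets every residue
class exactly once. Conversely, if every residue class is hit, the two windows have total length
at least `w`, which says that `η - (l ↦ ψ (m-l) + w l - k)` is nondecreasing on `[0,m]`; it is
`≥ 0` at `0` and `≤ 0` at `m`, hence zero.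
-/

open Finset

namespace Int

variable {w a b c : ℤ}

theorem mem_Ioc_modEq_iff_eq_toIocMod (hw : 0 < w) {u : ℤ} :
    u ∈ Set.Ioc a (a + w) ∧ u ≡ c [ZMOD w] ↔ u = toIocMod hw a c := by
  rw [eq_comm, toIocMod_eq_iff, Int.modEq_iff_dvd, dvd_iff_exists_eq_mul_left]
  simp only [zsmul_eq_mul, Int.cast_id, sub_eq_iff_eq_add']

theorem exists_mem_Ioc_modEq_iff_toIocMod_le (hw : 0 < w) (hb : b ≤ a + w) :
    (∃ u ∈ Set.Ioc a b, u ≡ c [ZMOD w]) ↔ toIocMod hw a c ≤ b := by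
  have ht := (mem_Ioc_modEq_iff_eq_toIocMod hw (a := a) (c := c)).2 rfl
  constructor
  · rintro ⟨u, hu, hmod⟩
    rw [← (mem_Ioc_modEq_iff_eq_toIocMod hw).1 ⟨⟨hu.1, hu.2.trans hb⟩, hmod⟩]
    exact hu.2
  · exact fun hle => ⟨_, ⟨ht.1.1, hle⟩, ht.2⟩

theorem exists_mem_Ioc_modEq_iff_lt_toIocMod (hw : 0 < w) (hab : a ≤ b) :
    (∃ u ∈ Set.Ioc b (a + w), u ≡ c [ZMOD w]) ↔ b < toIocMod hw a c := by
  have ht := (mem_Ioc_modEq_iff_eq_toIocMod hw (a := a) (c := c)).2 rfl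
  constructor
  · rintro ⟨u, hu, hmod⟩
    rw [← (mem_Ioc_modEq_iff_eq_toIocMod hw).1 ⟨⟨hab.trans_lt hu.1, hu.2⟩, hmod⟩]
    exact hu.1
  · exact fun hlt => ⟨_, ⟨hlt, ht.1.2⟩, ht.2⟩

theorem le_card_of_forall_exists_modEq {S : Finset ℤ} (h : ∀ c, ∃ u ∈ S, u ≡ c [ZMOD w]) :
    w ≤ #S := by
  have hsurj : Set.SurjOn (· % w) S (Finset.Ico 0 w) := by
    intro c hc
    rw [coe_Ico] at hc
    obtain ⟨u, hu, hmod⟩ := h c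
    exact ⟨u, hu, Eq.trans hmod (Int.emod_eq_of_lt hc.1 hc.2)⟩
  have := card_le_card_of_surjOn _ hsurj
  rw [Int.card_Ico] at this
  omega

end Int

namespace IsGC

variable {k m : ℤ} {φ ψ : ℤ → ℤ}

theorem apply_eq_iff (h : IsGC k m φ ψ) {u l : ℤ} (hu : 0 ≤ u) (huk : u ≤ k) (hl : 1 ≤ l)
    (hlm : l ≤ m) : φ u = l ↔ ψ (l - 1) < u ∧ u ≤ ψ l := by
  obtain ⟨-, -, -, -, hgc⟩ := h
  rw [hgc u l hu huk (by omega) hlm, lt_iff_not_ge, hgc u (l - 1) hu huk (by omega) (by omega)]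
  omega

theorem apply_mem_Icc_of_lt (h : IsGC k m φ ψ) (hm : 0 ≤ m) {u : ℤ} (hu : ψ 0 < u)
    (huk : u ≤ k) : φ u ∈ Set.Icc 1 m := by
  obtain ⟨hφ, hψ, -, -, hgc⟩ := h
  have hu0 : 0 ≤ u := (hψ 0 le_rfl hm).1.trans hu.le
  have hpos : ¬ φ u ≤ 0 := fun h0 => hu.not_ge ((hgc u 0 hu0 huk le_rfl hm).2 h0)
  have := hφ u hu0 huk
  constructor <;> omega

end IsGC

section Windows

variable {k m w γ l : ℤ} {φ ψ τ η : ℤ → ℤ}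

theorem mem_Aset_iff (h : IsGC k m φ ψ) (hl : 1 ≤ l) (hlm : l ≤ m) :
    l ∈ Aset k w φ γ ↔ ∃ u ∈ Set.Ioc (ψ (l - 1)) (ψ l), u ≡ γ + k [ZMOD w] := by
  constructor
  · rintro ⟨u, hu, huk, hmod, rfl⟩
    exact ⟨u, (h.apply_eq_iff (by omega) huk hl hlm).1 rfl, hmod⟩
  · rintro ⟨u, hu, hmod⟩
    have hψ := (h.2.1 (l - 1) (by omega) (by omega)).1
    have huk : u ≤ k := hu.2.trans (h.2.1 l (by omega) hlm).2
    exact ⟨u, by linarith [hu.1], huk, hmod, (h.apply_eq_iff (by linarith [hu.1]) huk hl hlm).2 hu⟩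

theorem mem_Bset_iff (h : IsGC (w * m - k) m τ η) (hl : 1 ≤ l) (hlm : l ≤ m) :
    l ∈ Bset k m w τ γ ↔ ∃ v ∈ Set.Ioc (η (m - l)) (η (m - l + 1)), v ≡ γ [ZMOD w] := by
  have hfibre : ∀ v, 0 ≤ v → v ≤ w * m - k →
      (m + 1 - τ v = l ↔ v ∈ Set.Ioc (η (m - l)) (η (m - l + 1))) := by
    intro v hv hvk
    have := h.apply_eq_iff hv hvk (l := m - l + 1) (by omega) (by omega)
    rw [add_sub_cancel_right] at this
    rw [Set.mem_Ioc, ← this]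
    omega
  constructor
  · rintro ⟨v, hv, hvk, hmod, hτ⟩
    exact ⟨v, (hfibre v (by omega) hvk).1 hτ, hmod⟩
  · rintro ⟨v, hv, hmod⟩
    have hη := (h.2.1 (m - l) (by omega) (by omega)).1
    have hvk : v ≤ w * m - k := hv.2.trans (h.2.1 (m - l + 1) (by omega) (by omega)).2
    exact ⟨v, by linarith [hv.1], hvk, hmod, (hfibre v (by linarith [hv.1]) hvk).2 hv⟩

theorem Aset_subset_Icc (h : IsGC k m φ ψ) (hm : 0 ≤ m) (hψ0 : ψ 0 = 0) :
    Aset k w φ γ ⊆ Set.Icc 1 m := by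
  rintro _ ⟨u, hu, huk, -, rfl⟩
  exact h.apply_mem_Icc_of_lt hm (by omega) huk

theorem Bset_subset_Icc (h : IsGC (w * m - k) m τ η) (hm : 0 ≤ m) (hη0 : η 0 ≤ 0) :
    Bset k m w τ γ ⊆ Set.Icc 1 m := by
  rintro _ ⟨v, hv, hvk, -, rfl⟩
  have := h.apply_mem_Icc_of_lt hm (by omega) hvk
  exact ⟨by linarith [this.2], by linarith [this.1]⟩

end Windows

section Duality

variable {k m w : ℤ} {φ ψ τ η : ℤ → ℤ}

theorem mem_Bset_iff_of_dual (h' : IsGC (w * m - k) m τ η)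
    (hdual : ∀ l, 0 ≤ l → l ≤ m → η l = ψ (m - l) + w * l - k) {γ l : ℤ} (hl : 1 ≤ l)
    (hlm : l ≤ m) :
    l ∈ Bset k m w τ γ ↔ ∃ u ∈ Set.Ioc (ψ l) (ψ (l - 1) + w), u ≡ γ + k [ZMOD w] := by
  rw [mem_Bset_iff h' hl hlm, hdual (m - l) (by omega) (by omega),
    hdual (m - l + 1) (by omega) (by omega), show m - (m - l) = l by ring,
    show m - (m - l + 1) = l - 1 by ring]
  have hshift : ∀ v u, u = v + k - w * (m - l) → (v ≡ γ [ZMOD w] ↔ u ≡ γ + k [ZMOD w]) := by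
    rintro v u rfl
    rw [Int.modEq_iff_dvd, Int.modEq_iff_dvd, show γ + k - (v + k - w * (m - l)) =
      γ - v + w * (m - l) by ring, dvd_add_left (dvd_mul_right w _)]
  constructor
  · rintro ⟨v, hv, hmod⟩
    exact ⟨v + k - w * (m - l), ⟨by linarith [hv.1], by linarith [hv.2]⟩,
      (hshift v _ rfl).1 hmod⟩
  · rintro ⟨u, hu, hmod⟩
    exact ⟨u - k + w * (m - l), ⟨by linarith [hu.1], by linarith [hu.2]⟩,
      (hshift _ u (by ring)).2 hmod⟩

theorem Aset_inter_Bset_eq_empty_and_union_eq_Icc_of_dual (hm : 0 ≤ m) (hw : 0 < w)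
    (h : IsGC k m φ ψ) (hψ0 : ψ 0 = 0) (h' : IsGC (w * m - k) m τ η)
    (hdual : ∀ l, 0 ≤ l → l ≤ m → η l = ψ (m - l) + w * l - k) (γ : ℤ) :
    Aset k w φ γ ∩ Bset k m w τ γ = ∅ ∧ Aset k w φ γ ∪ Bset k m w τ γ = Set.Icc 1 m := by
  have hη0 : η 0 ≤ 0 := by
    rw [hdual 0 le_rfl hm, sub_zero, mul_zero, add_zero]
    linarith [(h.2.1 m hm le_rfl).2]
  have hA : ∀ l ∈ Set.Icc 1 m,
      l ∈ Aset k w φ γ ↔ toIocMod hw (ψ (l - 1)) (γ + k) ≤ ψ l := by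
    rintro l ⟨hl, hlm⟩
    have hη := h'.2.2.2.1 (m - l) (m - l + 1) (by omega) (by omega) (by omega)
    rw [hdual (m - l) (by omega) (by omega), hdual (m - l + 1) (by omega) (by omega),
      show m - (m - l) = l by ring, show m - (m - l + 1) = l - 1 by ring] at hη
    rw [mem_Aset_iff h hl hlm, Int.exists_mem_Ioc_modEq_iff_toIocMod_le hw]
    linarith
  have hB : ∀ l ∈ Set.Icc 1 m,
      l ∈ Bset k m w τ γ ↔ ψ l < toIocMod hw (ψ (l - 1)) (γ + k) := by
    rintro l ⟨hl, hlm⟩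
    rw [mem_Bset_iff_of_dual h' hdual hl hlm, Int.exists_mem_Ioc_modEq_iff_lt_toIocMod hw]
    exact h.2.2.2.1 (l - 1) l (by omega) (by omega) hlm
  constructor
  · refine Set.eq_empty_of_forall_notMem fun l ⟨hlA, hlB⟩ => ?_
    have hl := Aset_subset_Icc h hm hψ0 hlA
    exact ((hA l hl).1 hlA).not_gt ((hB l hl).1 hlB)
  · refine Set.Subset.antisymm
      (Set.union_subset (Aset_subset_Icc h hm hψ0) (Bset_subset_Icc h' hm hη0)) fun l hl => ?_
    rcases le_or_gt (toIocMod hw (ψ (l - 1)) (γ + k)) (ψ l) with hle | hlt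
    · exact Or.inl ((hA l hl).2 hle)
    · exact Or.inr ((hB l hl).2 hlt)

theorem le_step_add_step_of_cover (h : IsGC k m φ ψ) (h' : IsGC (w * m - k) m τ η)
    (hcover : ∀ γ, Aset k w φ γ ∪ Bset k m w τ γ = Set.Icc 1 m) {l : ℤ} (hl : 1 ≤ l)
    (hlm : l ≤ m) : w ≤ (ψ l - ψ (l - 1)) + (η (m - l + 1) - η (m - l)) := by
  set S := Finset.Ioc (ψ (l - 1)) (ψ l) ∪ (Finset.Ioc (η (m - l)) (η (m - l + 1))).image (· + k)
  have hS : ∀ c, ∃ u ∈ S, u ≡ c [ZMOD w] := by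
    intro c
    have hmem : l ∈ Aset k w φ (c - k) ∪ Bset k m w τ (c - k) := by
      rw [hcover]
      exact ⟨hl, hlm⟩
    rcases hmem with hA | hB
    · obtain ⟨u, hu, hmod⟩ := (mem_Aset_iff h hl hlm).1 hA
      exact ⟨u, mem_union_left _ (Finset.mem_Ioc.2 hu), by rwa [sub_add_cancel] at hmod⟩
    · obtain ⟨v, hv, hmod⟩ := (mem_Bset_iff h' hl hlm).1 hB
      refine ⟨v + k, mem_union_right _ (mem_image_of_mem _ (Finset.mem_Ioc.2 hv)), ?_⟩
      simpa only [sub_add_cancel] using hmod.add_right k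
  have hcard : #S ≤ (ψ l - ψ (l - 1)).toNat + (η (m - l + 1) - η (m - l)).toNat := by
    rw [← Int.card_Ioc, ← Int.card_Ioc]
    exact (card_union_le _ _).trans (Nat.add_le_add_left card_image_le _)
  have hψ := h.2.2.2.1 (l - 1) l (by omega) (by omega) hlm
  have hη := h'.2.2.2.1 (m - l) (m - l + 1) (by omega) (by omega) (by omega)
  have := Int.le_card_of_forall_exists_modEq hS
  omega

theorem dual_of_Aset_union_Bset_eq_Icc (hm : 0 ≤ m) (h : IsGC k m φ ψ) (hψ0 : ψ 0 = 0)
    (h' : IsGC (w * m - k) m τ η) (hcover : ∀ γ, Aset k w φ γ ∪ Bset k m w τ γ = Set.Icc 1 m) :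
    ∀ l, 0 ≤ l → l ≤ m → η l = ψ (m - l) + w * l - k := by
  set d : ℤ → ℤ := fun j => η j - (ψ (m - j) + w * j - k)
  have hmono : MonotoneOn d (Set.Icc 0 m) := by
    refine monotoneOn_of_le_add_one Set.ordConnected_Icc fun j _ hj hj1 => ?_
    have := le_step_add_step_of_cover h h' hcover (l := m - j) (by linarith [hj1.2])
      (by linarith [hj.1])
    rw [show m - (m - j) + 1 = j + 1 by ring, show m - (m - j) = j by ring,
      show m - j - 1 = m - (j + 1) by ring] at this
    simp only [d]
    linarith
  have hd0 : 0 ≤ d 0 := by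
    simp only [d, sub_zero, mul_zero, add_zero]
    linarith [(h'.2.1 0 le_rfl hm).1, (h.2.1 m hm le_rfl).2]
  have hdm : d m ≤ 0 := by
    simp only [d, sub_self, hψ0]
    linarith [(h'.2.1 m hm le_rfl).2]
  intro l hl hlm
  have h0l := hmono ⟨le_rfl, hm⟩ ⟨hl, hlm⟩ hl
  have hlm' := hmono ⟨hl, hlm⟩ ⟨hm, le_rfl⟩ hlm
  simp only [d] at h0l hlm'
  linarith

end Duality

theorem stmt_10_general (k m w : ℤ) (hm : 0 ≤ m) (hw : 1 ≤ w)
    (φ ψ τ η : ℤ → ℤ)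
    (hgc : IsGC k m φ ψ) (hψ0 : ψ 0 = 0)
    (hgc' : IsGC (w * m - k) m τ η) :
    ((∀ l, 0 ≤ l → l ≤ m → η l = ψ (m - l) + w * l - k) ↔
      (∀ γ : ℤ, Aset k w φ γ ∩ Bset k m w τ γ = ∅ ∧
        Aset k w φ γ ∪ Bset k m w τ γ = Set.Icc 1 m)) ∧
    ((∀ l, 0 ≤ l → l ≤ m → η l = ψ (m - l) + w * l - k) ↔
      (∀ γ : ℤ, Aset k w φ γ ∪ Bset k m w τ γ = Set.Icc 1 m)) := by
  have h12 := Aset_inter_Bset_eq_empty_and_union_eq_Icc_of_dual hm (by omega) hgc hψ0 hgc'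
  have h31 := dual_of_Aset_union_Bset_eq_Icc hm hgc hψ0 hgc'
  exact ⟨⟨fun h γ => h12 h γ, fun h => h31 fun γ => (h γ).2⟩, ⟨fun h γ => (h12 h γ).2, h31⟩⟩

/-- Theorem 2.2 (central theorem): equivalence of (1) the duality formula
`η l = ψ (m-l) + w l - k`, (2) the partition statement
`A_γ ∩ B_γ = ∅` and `A_γ ∪ B_γ = [1,m]` for every `γ`, and (3) the covering
statement `A_γ ∪ B_γ = [1,m]` for every `γ`. -/
theorem stmt_10 (k m w : ℤ) (hk : 0 ≤ k) (hm : 0 ≤ m) (hw : 1 ≤ w)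
    (φ ψ τ η : ℤ → ℤ)
    (hgc : IsGC k m φ ψ) (hψ0 : ψ 0 = 0)
    (hstep : ∀ l, 1 ≤ l → l ≤ m → ψ l - ψ (l - 1) ≤ w)
    (hgc' : IsGC (w * m - k) m τ η) :
    ((∀ l, 0 ≤ l → l ≤ m → η l = ψ (m - l) + w * l - k) ↔
      (∀ γ : ℤ, Aset k w φ γ ∩ Bset k m w τ γ = ∅ ∧
        Aset k w φ γ ∪ Bset k m w τ γ = Set.Icc 1 m)) ∧
    ((∀ l, 0 ≤ l → l ≤ m → η l = ψ (m - l) + w * l - k) ↔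
      (∀ γ : ℤ, Aset k w φ γ ∪ Bset k m w τ γ = Set.Icc 1 m)) :=
  stmt_10_general k m w hm hw φ ψ τ η hgc hψ0 hgc'
end

section
/- Let E be a finite set of size m, w ∈ ℤ⁺, and (E, f) a w-demi-matroid with k = f(E). Define h: 2^E → ℤ by h(A) = f(E - A) + w|A| - f(E). Then (E, h) is a w-demi-matroid with h(E) = wm - k, and moreover f(A) = h(E - A) + w|A| - h(E) for every A ⊆ E. -/
/-- A `w`-demi-matroid on a finite set `E`: `f ∅ = 0` and for all `A ⊆ B`,
`0 ≤ f B - f A ≤ w (|B| - |A|)`. -/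
def IsWDemiMatroid {E : Type*} [Fintype E] [DecidableEq E] (w : ℤ)
    (f : Finset E → ℤ) : Prop :=
  f ∅ = 0 ∧ ∀ A B : Finset E, A ⊆ B →
    0 ≤ f B - f A ∧ f B - f A ≤ w * ((B.card : ℤ) - A.card)

/-!
The dual `h A = f Aᶜ + w |A| - f E` turns an increment `h B - h A` over `A ⊆ B` into
`w (|B| - |A|) - (f Aᶜ - f Bᶜ)`, and `Bᶜ ⊆ Aᶜ` has the same size difference `|B| - |A|`,
so the two demi-matroid bounds for `f` on `Bᶜ ⊆ Aᶜ` swap into those for `h` on `A ⊆ B`.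
Dualising twice gives back `f - f ∅`, because `|Aᶜ| + |A| = |E|`.
-/

section

open Finset

variable {E : Type*} [Fintype E] [DecidableEq E]

def wDual (w : ℤ) (f : Finset E → ℤ) (A : Finset E) : ℤ :=
  f Aᶜ + w * #A - f univ

lemma intCast_card_compl (A : Finset E) : (#Aᶜ : ℤ) = Fintype.card E - #A := by
  rw [eq_sub_iff_add_eq]
  exact_mod_cast card_compl_add_card A

lemma wDual_empty (w : ℤ) (f : Finset E → ℤ) : wDual w f ∅ = 0 := by
  simp [wDual]

lemma wDual_univ {w : ℤ} {f : Finset E → ℤ} (hf : f ∅ = 0) :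
    wDual w f univ = w * Fintype.card E - f univ := by
  simp [wDual, hf]

lemma wDual_wDual {w : ℤ} {f : Finset E → ℤ} (hf : f ∅ = 0) : wDual w (wDual w f) = f := by
  funext A
  rw [wDual, wDual_univ hf, wDual, compl_compl, intCast_card_compl]
  ring

lemma IsWDemiMatroid.wDual {w : ℤ} {f : Finset E → ℤ} (hf : IsWDemiMatroid w f) :
    IsWDemiMatroid w (wDual w f) := by
  refine ⟨wDual_empty w f, fun A B hAB => ?_⟩
  obtain ⟨hmono, hbound⟩ := hf.2 Bᶜ Aᶜ (compl_subset_compl.mpr hAB)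
  have hcard : (#Aᶜ : ℤ) - #Bᶜ = #B - #A := by
    rw [intCast_card_compl, intCast_card_compl]
    ring
  rw [hcard] at hbound
  simp only [_root_.wDual]
  constructor <;> linarith

end

theorem stmt_11_general {E : Type*} [Fintype E] [DecidableEq E] (m : ℕ)
    (hm : Fintype.card E = m) (w : ℤ)
    (f : Finset E → ℤ) (hf : IsWDemiMatroid w f)
    (k : ℤ) (hk : f Finset.univ = k)
    (h : Finset E → ℤ)
    (hh : ∀ A : Finset E, h A = f Aᶜ + w * A.card - f Finset.univ) :
    IsWDemiMatroid w h ∧ h Finset.univ = w * m - k ∧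
    ∀ A : Finset E, f A = h Aᶜ + w * A.card - h Finset.univ := by
  obtain rfl : h = wDual w f := funext hh
  refine ⟨hf.wDual, by rw [wDual_univ hf.1, hm, hk], fun A => ?_⟩
  exact (congrFun (wDual_wDual hf.1) A).symm

/-- Proposition 4.1: the dual `h A = f (E - A) + w |A| - f E` of a
`w`-demi-matroid is a `w`-demi-matroid with `h E = wm - k`, and
`f A = h (E - A) + w |A| - h E` for every `A ⊆ E`. -/
theorem stmt_11 {E : Type*} [Fintype E] [DecidableEq E] (m : ℕ)
    (hm : Fintype.card E = m) (w : ℤ) (hw : 1 ≤ w)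
    (f : Finset E → ℤ) (hf : IsWDemiMatroid w f)
    (k : ℤ) (hk : f Finset.univ = k)
    (h : Finset E → ℤ)
    (hh : ∀ A : Finset E, h A = f Aᶜ + w * A.card - f Finset.univ) :
    IsWDemiMatroid w h ∧ h Finset.univ = w * m - k ∧
    ∀ A : Finset E, f A = h Aᶜ + w * A.card - h Finset.univ :=
  stmt_11_general m hm w f hf k hk h hh
end

section
/- Let E be a finite set and C ⊆ 2^E with ∅, E ∈ C such that C is an abundance and C is closed under unions and intersections (I ∩ J ∈ C and I ∪ J ∈ C for all I, J ∈ C). Then there exists a partial order ⪯ on E such that C is exactly the set of ideals of the poset (E, ⪯). -/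
/-!
Every member of `𝒞` containing `v` contains `u`: write `u ≼ v`. Since `𝒞` is a finite lattice
of sets containing `∅` and `E`, the intersection of the members containing `v` is the principal
ideal of `v`, and every ideal is the union of its principal ideals, so `𝒞` is exactly the set of
ideals of the preorder `≼`. Antisymmetry comes from the abundance: removing one element at a time
from `E` inside `𝒞`, two distinct points are eventually separated by a member of `𝒞`.
-/

open Finset

section SetFamily

variable {E : Type*} {𝒞 : Set (Finset E)}

def SpecializesIn (𝒞 : Set (Finset E)) (u v : E) : Prop :=
  ∀ I ∈ 𝒞, v ∈ I → u ∈ I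

theorem isPreorder_specializesIn (𝒞 : Set (Finset E)) : IsPreorder E (SpecializesIn 𝒞) where
  refl _ _ _ h := h
  trans _ _ _ hab hbc I hI hc := hab I hI (hbc I hI hc)

variable [DecidableEq E]

theorem exists_mem_xor_mem_of_forall_exists_card_succ
    (hdown : ∀ B ∈ 𝒞, B ≠ ∅ → ∃ A ∈ 𝒞, A ⊆ B ∧ A.card + 1 = B.card)
    {I : Finset E} (hI : I ∈ 𝒞) {u v : E} (hu : u ∈ I) (hv : v ∈ I) (huv : u ≠ v) :
    ∃ J ∈ 𝒞, Xor (u ∈ J) (v ∈ J) := by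
  induction I using Finset.strongInduction with
  | H I ih =>
    obtain ⟨A, hA, hAI, hcard⟩ := hdown I hI (ne_empty_of_mem hu)
    obtain ⟨x, hxA, rfl⟩ := exists_eq_insert_iff.2 ⟨hAI, hcard⟩
    by_cases huA : u ∈ A <;> by_cases hvA : v ∈ A
    · exact ih A (ssubset_insert hxA) hA huA hvA
    · exact ⟨A, hA, Or.inl ⟨huA, hvA⟩⟩
    · exact ⟨A, hA, Or.inr ⟨hvA, huA⟩⟩
    · -- `u` and `v` are both the point of `insert x A` outside `A`
      rw [mem_insert] at hu hv
      exact absurd ((hu.resolve_right huA).trans (hv.resolve_right hvA).symm) huv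

variable [Fintype E]

theorem specializesIn_antisymm (huniv : (univ : Finset E) ∈ 𝒞)
    (hdown : ∀ B ∈ 𝒞, B ≠ ∅ → ∃ A ∈ 𝒞, A ⊆ B ∧ A.card + 1 = B.card)
    {u v : E} (huv : SpecializesIn 𝒞 u v) (hvu : SpecializesIn 𝒞 v u) : u = v := by
  by_contra hne
  obtain ⟨J, hJ, ⟨huJ, hvJ⟩ | ⟨hvJ, huJ⟩⟩ :=
    exists_mem_xor_mem_of_forall_exists_card_succ hdown huniv (mem_univ u) (mem_univ v) hne
  · exact hvJ (hvu J hJ huJ)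
  · exact huJ (huv J hJ hvJ)

theorem exists_mem_forall_mem_iff_specializesIn (huniv : (univ : Finset E) ∈ 𝒞)
    (hcap : ∀ I ∈ 𝒞, ∀ J ∈ 𝒞, I ∩ J ∈ 𝒞) (v : E) :
    ∃ P ∈ 𝒞, ∀ u, u ∈ P ↔ SpecializesIn 𝒞 u v := by
  classical
  refine ⟨({J | J ∈ 𝒞 ∧ v ∈ J} : Finset (Finset E)).inf id,
    inf_induction huniv hcap fun J hJ => (mem_filter.1 hJ).2.1, fun u => ?_⟩
  simp [SpecializesIn, mem_inf]

theorem eq_setOf_specializesIn_closed (hempty : (∅ : Finset E) ∈ 𝒞)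
    (huniv : (univ : Finset E) ∈ 𝒞) (hcap : ∀ I ∈ 𝒞, ∀ J ∈ 𝒞, I ∩ J ∈ 𝒞)
    (hcup : ∀ I ∈ 𝒞, ∀ J ∈ 𝒞, I ∪ J ∈ 𝒞) :
    𝒞 = {I : Finset E | ∀ v ∈ I, ∀ u, SpecializesIn 𝒞 u v → u ∈ I} := by
  ext I
  refine ⟨fun hI v hv u huv => huv I hI hv, fun hideal => ?_⟩
  choose P hP𝒞 hP using exists_mem_forall_mem_iff_specializesIn huniv hcap
  have hI : I = I.sup P := by
    ext u
    simp only [mem_sup, hP]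
    exact ⟨fun hu => ⟨u, hu, (isPreorder_specializesIn 𝒞).refl u⟩,
      fun ⟨v, hv, huv⟩ => hideal v hv u huv⟩
  rw [hI]
  exact sup_induction hempty hcup fun v _ => hP𝒞 v

end SetFamily

theorem stmt_13_general {E : Type*} [Fintype E] [DecidableEq E] (𝒞 : Set (Finset E))
    (hempty : (∅ : Finset E) ∈ 𝒞) (huniv : (Finset.univ : Finset E) ∈ 𝒞)
    (hdown : ∀ B ∈ 𝒞, B ≠ ∅ → ∃ A ∈ 𝒞, A ⊆ B ∧ A.card + 1 = B.card)
    (hcap : ∀ I ∈ 𝒞, ∀ J ∈ 𝒞, I ∩ J ∈ 𝒞)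
    (hcup : ∀ I ∈ 𝒞, ∀ J ∈ 𝒞, I ∪ J ∈ 𝒞) :
    ∃ r : E → E → Prop, IsPartialOrder E r ∧
      𝒞 = {I : Finset E | ∀ v ∈ I, ∀ u, r u v → u ∈ I} :=
  ⟨SpecializesIn 𝒞,
    { toIsPreorder := isPreorder_specializesIn 𝒞
      antisymm := fun _ _ => specializesIn_antisymm huniv hdown },
    eq_setOf_specializesIn_closed hempty huniv hcap hcup⟩

/-- Proposition 4.2(2): a collection `𝒞 ⊆ 2^E` containing `∅` and `E` which is
an abundance and is closed under unions and intersections is the set of ideals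
of some partial order on `E`. -/
theorem stmt_13 {E : Type*} [Fintype E] [DecidableEq E] (𝒞 : Set (Finset E))
    (hempty : (∅ : Finset E) ∈ 𝒞) (huniv : (Finset.univ : Finset E) ∈ 𝒞)
    (hup : ∀ A ∈ 𝒞, A ≠ Finset.univ →
      ∃ B ∈ 𝒞, A ⊆ B ∧ B.card = A.card + 1)
    (hdown : ∀ B ∈ 𝒞, B ≠ ∅ → ∃ A ∈ 𝒞, A ⊆ B ∧ A.card + 1 = B.card)
    (hcap : ∀ I ∈ 𝒞, ∀ J ∈ 𝒞, I ∩ J ∈ 𝒞)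
    (hcup : ∀ I ∈ 𝒞, ∀ J ∈ 𝒞, I ∪ J ∈ 𝒞) :
    ∃ r : E → E → Prop, IsPartialOrder E r ∧
      𝒞 = {I : Finset E | ∀ v ∈ I, ∀ u, r u v → u ∈ I} :=
  stmt_13_general 𝒞 hempty huniv hdown hcap hcup
end

section
/- Let E be a finite set with |E| = m, w ∈ ℤ⁺, and (E, f) a w-demi-matroid with k = f(E). Define h: 2^E → ℤ by h(B) = f(E - B) + w|B| - k. Let C ⊆ 2^E with ∅, E ∈ C be an abundance, and let D = {E - A : A ∈ C}. Define d_a(f, C) = min{|B| : B ∈ C, a ≤ f(B)} for a ∈ [0,k], and K_b(f, C) = max{f(B) : B ∈ C, |B| = b} for b ∈ [0,m], and similarly for (h, D). Then: (1) K_l(h, D) = K_{m-l}(f, C) + wl - k for all l ∈ [0,m]; (2) for every γ ∈ ℤ, the sets {d_u(f, C) : u ∈ [1,k], u ≡ γ + k (mod w)} and {m + 1 - d_v(h, D) : v ∈ [1, wm-k], v ≡ γ (mod w)} are disjoint and their union is [1,m]. -/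
/-- The `a`-th generalized weight `d_a(f, 𝒞) = min {|B| : B ∈ 𝒞, a ≤ f B}`. -/
noncomputable def dgen {E : Type*} (f : Finset E → ℤ) (𝒞 : Set (Finset E))
    (a : ℤ) : ℤ :=
  sInf {x | ∃ B ∈ 𝒞, a ≤ f B ∧ (B.card : ℤ) = x}

/-- The `b`-th profile `K_b(f, 𝒞) = max {f B : B ∈ 𝒞, |B| = b}`. -/
noncomputable def Kgen {E : Type*} (f : Finset E → ℤ) (𝒞 : Set (Finset E))
    (b : ℕ) : ℤ :=
  sSup {x | ∃ B ∈ 𝒞, B.card = b ∧ f B = x}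

open Finset

theorem Int.exists_modEq_mem_Ioc_iff_not {w : ℤ} (hw : 0 < w) (c p q : ℤ) :
    (∃ u, u ≡ c [ZMOD w] ∧ u ∈ Set.Ioc p q) ↔
      ¬ ∃ u, u ≡ c [ZMOD w] ∧ u ∈ Set.Ioc q (p + w) := by
  constructor
  · rintro ⟨u, hu, hpu, huq⟩ ⟨u', hu', hqu', hu'p⟩
    have hdvd : w ∣ u' - u := (hu.trans hu'.symm).dvd
    have hle := Int.le_of_dvd (by omega) hdvd
    omega
  · intro hnot
    obtain ⟨hpt, htp⟩ := toIocMod_mem_Ioc hw p c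
    have ht : toIocMod hw p c ≡ c [ZMOD w] :=
      Int.modEq_iff_dvd.mpr ⟨toIocDiv hw p c, by
        linear_combination -(toIocMod_sub_self_eq_mul hw p c)⟩
    by_cases htq : toIocMod hw p c ≤ q
    · exact ⟨_, ht, hpt, htq⟩
    · exact absurd ⟨_, ht, not_le.mp htq, htp⟩ hnot

structure IsAbundance {E : Type*} [Fintype E] (𝒞 : Set (Finset E)) : Prop where
  empty_mem : ∅ ∈ 𝒞
  univ_mem : univ ∈ 𝒞
  exists_succ : ∀ A ∈ 𝒞, A ≠ univ → ∃ B ∈ 𝒞, A ⊆ B ∧ B.card = A.card + 1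
  exists_pred : ∀ B ∈ 𝒞, B ≠ ∅ → ∃ A ∈ 𝒞, A ⊆ B ∧ A.card + 1 = B.card

namespace IsAbundance

variable {E : Type*} [Fintype E] {𝒞 : Set (Finset E)}

theorem exists_card (h𝒞 : IsAbundance 𝒞) {b : ℕ} (hb : b ≤ Fintype.card E) :
    ∃ B ∈ 𝒞, B.card = b := by
  induction b with
  | zero => exact ⟨∅, h𝒞.empty_mem, rfl⟩
  | succ b ih =>
    obtain ⟨A, hA, rfl⟩ := ih (by omega)
    obtain ⟨B, hB, -, hcard⟩ :=
      h𝒞.exists_succ A hA ((card_lt_iff_ne_univ A).mp (by omega))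
    exact ⟨B, hB, hcard⟩

theorem compl [DecidableEq E] (h𝒞 : IsAbundance 𝒞) : IsAbundance {B | Bᶜ ∈ 𝒞} where
  empty_mem := by simpa using h𝒞.univ_mem
  univ_mem := by simpa using h𝒞.empty_mem
  exists_succ A hA hA_ne := by
    obtain ⟨B, hB, hBA, hcard⟩ := h𝒞.exists_pred Aᶜ hA (by simpa using hA_ne)
    refine ⟨Bᶜ, by simpa using hB, subset_compl_comm.mp hBA, ?_⟩
    have := card_add_card_compl A
    have := card_add_card_compl B
    omega
  exists_pred B hB hB_ne := by
    obtain ⟨A, hA, hBA, hcard⟩ := h𝒞.exists_succ Bᶜ hB (by simpa using hB_ne)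
    refine ⟨Aᶜ, by simpa using hA, compl_le_iff_compl_le.mp hBA, ?_⟩
    have := card_add_card_compl A
    have := card_add_card_compl B
    omega

end IsAbundance

def demiDual {E : Type*} [Fintype E] [DecidableEq E] (w : ℤ) (f : Finset E → ℤ) :
    Finset E → ℤ :=
  fun B => f Bᶜ + w * B.card - f univ

namespace IsWDemiMatroid

variable {E : Type*} [Fintype E] [DecidableEq E] {w : ℤ} {f : Finset E → ℤ}

theorem monotone (hf : IsWDemiMatroid w f) {A B : Finset E} (hAB : A ⊆ B) : f A ≤ f B := by
  linarith [(hf.2 A B hAB).1]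

theorem nonneg (hf : IsWDemiMatroid w f) (B : Finset E) : 0 ≤ f B :=
  hf.1 ▸ hf.monotone (empty_subset B)

theorem le_univ (hf : IsWDemiMatroid w f) (B : Finset E) : f B ≤ f univ :=
  hf.monotone (subset_univ B)

theorem demiDual (hf : IsWDemiMatroid w f) : IsWDemiMatroid w (demiDual w f) := by
  refine ⟨by simp [_root_.demiDual], fun A B hAB => ?_⟩
  obtain ⟨h0, h1⟩ := hf.2 Bᶜ Aᶜ (compl_subset_compl.mpr hAB)
  have hcard : (Aᶜ.card : ℤ) - Bᶜ.card = B.card - A.card := by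
    have := card_add_card_compl A
    have := card_add_card_compl B
    omega
  rw [hcard] at h1
  simp only [_root_.demiDual]
  constructor <;> linarith

theorem demiDual_univ (hf : IsWDemiMatroid w f) :
    _root_.demiDual w f univ = w * Fintype.card E - f univ := by
  simp [_root_.demiDual, hf.1]

end IsWDemiMatroid

section Profile

variable {E : Type*} [Fintype E] [DecidableEq E] {w : ℤ} {f : Finset E → ℤ}
  {𝒞 : Set (Finset E)}

theorem bddAbove_Kgen_set (hf : IsWDemiMatroid w f) (𝒞 : Set (Finset E)) (b : ℕ) :
    BddAbove {x | ∃ B ∈ 𝒞, B.card = b ∧ f B = x} :=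
  ⟨f univ, by rintro _ ⟨B, -, -, rfl⟩; exact hf.le_univ B⟩

theorem le_Kgen (hf : IsWDemiMatroid w f) {B : Finset E} (hB : B ∈ 𝒞) :
    f B ≤ Kgen f 𝒞 B.card :=
  le_csSup (bddAbove_Kgen_set hf 𝒞 _) ⟨B, hB, rfl, rfl⟩

theorem exists_eq_Kgen (hf : IsWDemiMatroid w f) (h𝒞 : IsAbundance 𝒞) {b : ℕ}
    (hb : b ≤ Fintype.card E) : ∃ B ∈ 𝒞, B.card = b ∧ f B = Kgen f 𝒞 b := by
  obtain ⟨B, hB, hcard⟩ := h𝒞.exists_card hb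
  refine Int.csSup_mem ?_ (bddAbove_Kgen_set hf 𝒞 b)
  exact ⟨f B, B, hB, hcard, rfl⟩

theorem Kgen_zero (hf : IsWDemiMatroid w f) (h𝒞 : IsAbundance 𝒞) : Kgen f 𝒞 0 = 0 := by
  obtain ⟨B, -, hcard, hfB⟩ := exists_eq_Kgen hf h𝒞 (Nat.zero_le _)
  rw [← hfB, card_eq_zero.mp hcard, hf.1]

theorem Kgen_nonneg (hf : IsWDemiMatroid w f) (h𝒞 : IsAbundance 𝒞) {b : ℕ}
    (hb : b ≤ Fintype.card E) : 0 ≤ Kgen f 𝒞 b := by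
  obtain ⟨B, -, -, hfB⟩ := exists_eq_Kgen hf h𝒞 hb
  exact hfB ▸ hf.nonneg B

theorem Kgen_le_univ (hf : IsWDemiMatroid w f) (h𝒞 : IsAbundance 𝒞) {b : ℕ}
    (hb : b ≤ Fintype.card E) : Kgen f 𝒞 b ≤ f univ := by
  obtain ⟨B, -, -, hfB⟩ := exists_eq_Kgen hf h𝒞 hb
  exact hfB ▸ hf.le_univ B

theorem Kgen_le_Kgen_succ (hf : IsWDemiMatroid w f) (h𝒞 : IsAbundance 𝒞) {c : ℕ}
    (hc : c < Fintype.card E) : Kgen f 𝒞 c ≤ Kgen f 𝒞 (c + 1) := by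
  obtain ⟨A, hA, hcard, hfA⟩ := exists_eq_Kgen hf h𝒞 hc.le
  obtain ⟨B, hB, hAB, hBcard⟩ :=
    h𝒞.exists_succ A hA ((card_lt_iff_ne_univ A).mp (by omega))
  calc Kgen f 𝒞 c = f A := hfA.symm
    _ ≤ f B := hf.monotone hAB
    _ ≤ Kgen f 𝒞 (c + 1) := hcard ▸ hBcard ▸ le_Kgen hf hB

theorem Kgen_mono (hf : IsWDemiMatroid w f) (h𝒞 : IsAbundance 𝒞) {b c : ℕ} (hbc : b ≤ c)
    (hc : c ≤ Fintype.card E) : Kgen f 𝒞 b ≤ Kgen f 𝒞 c := by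
  induction c, hbc using Nat.le_induction with
  | base => rfl
  | succ c _ ih => exact (ih (by omega)).trans (Kgen_le_Kgen_succ hf h𝒞 (by omega))

theorem Kgen_compl_dual (hf : IsWDemiMatroid w f) (h𝒞 : IsAbundance 𝒞) {l : ℕ}
    (hl : l ≤ Fintype.card E) :
    Kgen (demiDual w f) {B | Bᶜ ∈ 𝒞} l =
      Kgen f 𝒞 (Fintype.card E - l) + w * l - f univ := by
  apply le_antisymm
  · obtain ⟨B, hB, hcard, hfB⟩ := exists_eq_Kgen hf.demiDual h𝒞.compl hl
    have hBc : Bᶜ.card = Fintype.card E - l := by rw [card_compl, hcard]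
    have hle := le_Kgen hf (𝒞 := 𝒞) (B := Bᶜ) hB
    rw [hBc] at hle
    rw [← hfB, demiDual, hcard]
    linarith
  · obtain ⟨A, hA, hcard, hfA⟩ := exists_eq_Kgen hf h𝒞 (Nat.sub_le _ l)
    have hAc : Aᶜ.card = l := by rw [card_compl, hcard]; omega
    have hle := le_Kgen hf.demiDual (𝒞 := {B | Bᶜ ∈ 𝒞}) (B := Aᶜ) (by simpa using hA)
    simp only [demiDual, compl_compl, hAc] at hle
    linarith

theorem dgen_eq (hf : IsWDemiMatroid w f) (h𝒞 : IsAbundance 𝒞) {a : ℤ} {b : ℕ}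
    (hb : b ≤ Fintype.card E) (ha : a ∈ Set.Ioc (Kgen f 𝒞 (b - 1)) (Kgen f 𝒞 b)) :
    dgen f 𝒞 a = b := by
  refine IsLeast.csInf_eq ⟨?_, ?_⟩
  · obtain ⟨B, hB, hcard, hfB⟩ := exists_eq_Kgen hf h𝒞 hb
    exact ⟨B, hB, hfB ▸ ha.2, by rw [hcard]⟩
  · rintro _ ⟨C, hC, haC, rfl⟩
    by_contra! hC_lt
    have : f C ≤ Kgen f 𝒞 (b - 1) :=
      (le_Kgen hf hC).trans (Kgen_mono hf h𝒞 (by omega) (by omega))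
    linarith [ha.1]

theorem exists_mem_Ioc_Kgen (hf : IsWDemiMatroid w f) (h𝒞 : IsAbundance 𝒞) {a : ℤ}
    (ha₀ : 0 < a) (ha : a ≤ f univ) :
    ∃ b : ℕ, 1 ≤ b ∧ b ≤ Fintype.card E ∧ a ∈ Set.Ioc (Kgen f 𝒞 (b - 1)) (Kgen f 𝒞 b) := by
  classical
  have htop : f univ ≤ Kgen f 𝒞 (Fintype.card E) := by
    simpa using le_Kgen hf h𝒞.univ_mem
  have hex : ∃ b, a ≤ Kgen f 𝒞 b := ⟨_, ha.trans htop⟩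
  have hb₀ : Nat.find hex ≠ 0 := fun h0 => by
    have := Nat.find_spec hex
    rw [h0, Kgen_zero hf h𝒞] at this
    omega
  exact ⟨Nat.find hex, by omega, Nat.find_min' hex (ha.trans htop),
    not_le.mp (Nat.find_min hex (by omega)), Nat.find_spec hex⟩

theorem exists_dgen_eq_iff (hf : IsWDemiMatroid w f) (h𝒞 : IsAbundance 𝒞) (c x : ℤ) :
    (∃ u, 1 ≤ u ∧ u ≤ f univ ∧ u ≡ c [ZMOD w] ∧ dgen f 𝒞 u = x) ↔
      ∃ b : ℕ, 1 ≤ b ∧ b ≤ Fintype.card E ∧ (b : ℤ) = x ∧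
        ∃ u, u ≡ c [ZMOD w] ∧ u ∈ Set.Ioc (Kgen f 𝒞 (b - 1)) (Kgen f 𝒞 b) := by
  constructor
  · rintro ⟨u, hu₀, hu, huc, rfl⟩
    obtain ⟨b, hb₀, hb, hub⟩ := exists_mem_Ioc_Kgen hf h𝒞 hu₀ hu
    exact ⟨b, hb₀, hb, (dgen_eq hf h𝒞 hb hub).symm, u, huc, hub⟩
  · rintro ⟨b, -, hb, rfl, u, huc, hub⟩
    refine ⟨u, ?_, hub.2.trans (Kgen_le_univ hf h𝒞 hb), huc, dgen_eq hf h𝒞 hb hub⟩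
    linarith [hub.1, Kgen_nonneg hf h𝒞 (b := b - 1) (by omega)]

theorem exists_modEq_mem_Ioc_Kgen_compl_dual_iff (hf : IsWDemiMatroid w f)
    (h𝒞 : IsAbundance 𝒞) (γ : ℤ) {l : ℕ} (hl₀ : 1 ≤ l) (hl : l ≤ Fintype.card E) :
    (∃ v, v ≡ γ [ZMOD w] ∧ v ∈ Set.Ioc
        (Kgen (demiDual w f) {B | Bᶜ ∈ 𝒞} (l - 1))
        (Kgen (demiDual w f) {B | Bᶜ ∈ 𝒞} l)) ↔
      ∃ u, u ≡ γ + f univ [ZMOD w] ∧ u ∈ Set.Ioc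
        (Kgen f 𝒞 (Fintype.card E + 1 - l)) (Kgen f 𝒞 (Fintype.card E - l) + w) := by
  rw [Kgen_compl_dual hf h𝒞 (by omega), Kgen_compl_dual hf h𝒞 hl,
    show Fintype.card E - (l - 1) = Fintype.card E + 1 - l by omega,
    show ((l - 1 : ℕ) : ℤ) = l - 1 by omega]
  -- `v ↦ v + f univ - w * (l - 1)` matches the two windows and shifts the residue class by `f univ`
  have hshift : ∀ v, v ≡ γ [ZMOD w] ↔ v + f univ - w * (l - 1) ≡ γ + f univ [ZMOD w] := by
    intro v
    simp only [Int.modEq_iff_dvd]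
    rw [show γ + f univ - (v + f univ - w * (l - 1)) = γ - v + w * (l - 1) by ring]
    exact (dvd_add_left (dvd_mul_right w _)).symm
  constructor
  · rintro ⟨v, hv, hv₁, hv₂⟩
    exact ⟨v + f univ - w * (l - 1), (hshift v).mp hv, by linarith, by linarith⟩
  · rintro ⟨u, hu, hu₁, hu₂⟩
    refine ⟨u - f univ + w * (l - 1), (hshift _).mpr ?_, by linarith, by linarith⟩
    rwa [show u - f univ + w * (l - 1) + f univ - w * (l - 1) = u by ring]

theorem exists_dual_dgen_eq_iff (hf : IsWDemiMatroid w f) (h𝒞 : IsAbundance 𝒞) (γ x : ℤ) :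
    (∃ v, 1 ≤ v ∧ v ≤ w * Fintype.card E - f univ ∧ v ≡ γ [ZMOD w] ∧
        (Fintype.card E : ℤ) + 1 -
          dgen (demiDual w f) {B | Bᶜ ∈ 𝒞} v = x) ↔
      ∃ b : ℕ, 1 ≤ b ∧ b ≤ Fintype.card E ∧ (b : ℤ) = x ∧
        ∃ u, u ≡ γ + f univ [ZMOD w] ∧ u ∈ Set.Ioc (Kgen f 𝒞 b) (Kgen f 𝒞 (b - 1) + w) := by
  have hdual := exists_dgen_eq_iff hf.demiDual h𝒞.compl γ (Fintype.card E + 1 - x)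
  rw [hf.demiDual_univ] at hdual
  calc _ ↔ ∃ v, 1 ≤ v ∧ v ≤ w * Fintype.card E - f univ ∧ v ≡ γ [ZMOD w] ∧
        dgen (demiDual w f) {B | Bᶜ ∈ 𝒞} v =
          Fintype.card E + 1 - x :=
        exists_congr fun v => and_congr_right' <| and_congr_right' <| and_congr_right' <|
          by omega
    _ ↔ _ := hdual
    _ ↔ _ := by
      constructor
      · rintro ⟨l, hl₀, hl, hlx, hwin⟩
        rw [exists_modEq_mem_Ioc_Kgen_compl_dual_iff hf h𝒞 γ hl₀ hl] at hwin
        refine ⟨Fintype.card E + 1 - l, by omega, by omega, by omega, ?_⟩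
        rwa [show Fintype.card E + 1 - l - 1 = Fintype.card E - l by omega]
      · rintro ⟨b, hb₀, hb, hbx, hwin⟩
        refine ⟨Fintype.card E + 1 - b, by omega, by omega, by omega, ?_⟩
        rwa [exists_modEq_mem_Ioc_Kgen_compl_dual_iff hf h𝒞 γ (by omega) (by omega),
          show Fintype.card E + 1 - (Fintype.card E + 1 - b) = b by omega,
          show Fintype.card E - (Fintype.card E + 1 - b) = b - 1 by omega]

end Profile

/-- Theorem 4.1: Wei-type duality for `w`-demi-matroids with respect to an
abundance `𝒞` and its complement family `𝒟`. -/
theorem stmt_15 {E : Type*} [Fintype E] [DecidableEq E] (m : ℕ)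
    (hm : Fintype.card E = m) (w : ℤ) (hw : 1 ≤ w)
    (f : Finset E → ℤ) (hf : IsWDemiMatroid w f)
    (k : ℤ) (hk : f Finset.univ = k)
    (h : Finset E → ℤ)
    (hh : ∀ B : Finset E, h B = f Bᶜ + w * B.card - k)
    (𝒞 : Set (Finset E))
    (hempty : (∅ : Finset E) ∈ 𝒞) (huniv : (Finset.univ : Finset E) ∈ 𝒞)
    (hup : ∀ A ∈ 𝒞, A ≠ Finset.univ →
      ∃ B ∈ 𝒞, A ⊆ B ∧ B.card = A.card + 1)
    (hdown : ∀ B ∈ 𝒞, B ≠ ∅ → ∃ A ∈ 𝒞, A ⊆ B ∧ A.card + 1 = B.card)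
    (𝒟 : Set (Finset E)) (h𝒟 : 𝒟 = {B | Bᶜ ∈ 𝒞}) :
    (∀ l : ℕ, l ≤ m → Kgen h 𝒟 l = Kgen f 𝒞 (m - l) + w * l - k) ∧
    (∀ γ : ℤ,
      {x | ∃ u, 1 ≤ u ∧ u ≤ k ∧ u ≡ γ + k [ZMOD w] ∧ dgen f 𝒞 u = x} ∩
        {x | ∃ v, 1 ≤ v ∧ v ≤ w * m - k ∧ v ≡ γ [ZMOD w] ∧
          (m : ℤ) + 1 - dgen h 𝒟 v = x} = ∅ ∧
      {x | ∃ u, 1 ≤ u ∧ u ≤ k ∧ u ≡ γ + k [ZMOD w] ∧ dgen f 𝒞 u = x} ∪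
        {x | ∃ v, 1 ≤ v ∧ v ≤ w * m - k ∧ v ≡ γ [ZMOD w] ∧
          (m : ℤ) + 1 - dgen h 𝒟 v = x} = Set.Icc 1 (m : ℤ)) := by
  subst hk hm h𝒟
  obtain rfl : h = demiDual w f := funext hh
  have h𝒞 : IsAbundance 𝒞 := ⟨hempty, huniv, hup, hdown⟩
  refine ⟨fun l hl => Kgen_compl_dual hf h𝒞 hl, fun γ => ⟨?_, ?_⟩⟩ <;> ext x <;>
    simp only [Set.mem_inter_iff, Set.mem_union, Set.mem_ofPred_eq, Set.mem_empty_iff_false,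
      iff_false, Set.mem_Icc, exists_dgen_eq_iff hf h𝒞, exists_dual_dgen_eq_iff hf h𝒞]
  · rintro ⟨⟨b, -, -, rfl, hlow⟩, ⟨b', -, -, hb', hhigh⟩⟩
    obtain rfl : b' = b := by exact_mod_cast hb'
    exact (Int.exists_modEq_mem_Ioc_iff_not (by omega) _ _ _).mp hlow hhigh
  · constructor
    · rintro (⟨b, hb₀, hb, rfl, -⟩ | ⟨b, hb₀, hb, rfl, -⟩) <;> omega
    · rintro ⟨hx₀, hx⟩
      obtain ⟨b, rfl⟩ := Int.eq_ofNat_of_zero_le (by omega : 0 ≤ x)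
      by_cases hhigh : ∃ u, u ≡ γ + f univ [ZMOD w] ∧
          u ∈ Set.Ioc (Kgen f 𝒞 b) (Kgen f 𝒞 (b - 1) + w)
      · exact .inr ⟨b, by omega, by omega, rfl, hhigh⟩
      · exact .inl ⟨b, by omega, by omega, rfl,
          (Int.exists_modEq_mem_Ioc_iff_not (by omega) _ _ _).mpr hhigh⟩
end

section
/- Let A be a finite chain ring, E a finite set, and C ⊆ A^E a right linear code with t = rank(C). Define f: 2^E → ℤ by f(J) = rank(C ∩ δ(J)), where δ(J) = {α ∈ A^E : α_i = 0 for all i ∉ J}. Then (E, f) is a demi-matroid with f(E) = t; that is, f(∅) = 0 and 0 ≤ f(D) - f(B) ≤ |D| - |B| for all B ⊆ D ⊆ E. -/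
/-!
Over a finite ring `A` whose left ideals form a chain, the nonunits form the left ideal `Aθ`
generated by a single element `θ`, which is nilpotent, and every nonzero element is `u θ ^ k`
with `u` a unit. Comparing the sizes of the left and right annihilators of `θ` shows `Aθ = θA`;
hence every right ideal is generated by one of its elements `u θ ^ k` of least exponent, i.e.
`Aᵐᵒᵖ` is a principal ideal ring.

Over a finite principal ideal ring a submodule of `Rⁿ` has at most `n` generators (peel off one
coordinate at a time: the image is principal and the kernel lives in `Rⁿ⁻¹`), so the minimal
number of generators is monotone. For `B ⊆ D`, projecting `C ∩ δ(D)` onto the coordinates in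
`D \ B` has kernel `C ∩ δ(B)`, which gives `f D ≤ f B + |D \ B|`.
-/

/-- The rank of a module `V`: the minimum number of generators. -/
noncomputable def minGen {R M : Type*} [Ring R] [AddCommGroup M] [Module R M]
    (V : Submodule R M) : ℕ :=
  sInf {n | ∃ s : Finset M, s.card = n ∧ Submodule.span R (↑s : Set M) = V}

/-- `δ(J) = {α ∈ A^E : α_i = 0 for all i ∉ J}`, as a right `A`-submodule. -/
def deltaSub (A : Type*) [Ring A] (E : Type*) (J : Finset E) :
    Submodule Aᵐᵒᵖ (E → A) :=
  Submodule.pi {i | i ∉ J} (fun _ => ⊥)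

section ChainRing

variable {A : Type*} [Ring A]

theorem exists_forall_not_isUnit_iff_mem_span [Finite A] [Nontrivial A]
    (hch : ∀ I J : Ideal A, I ≤ J ∨ J ≤ I) :
    ∃ θ : A, ∀ x : A, ¬IsUnit x ↔ x ∈ Ideal.span {θ} := by
  obtain ⟨θ, hθ, hmax⟩ := (Set.toFinite (nonunits A)).exists_maximalFor
    (fun x => Ideal.span {x}) _ ⟨0, not_isUnit_zero⟩
  refine ⟨θ, fun x => ⟨fun hx => ?_, fun hx hu => ?_⟩⟩
  · rcases hch (Ideal.span {x}) (Ideal.span {θ}) with h | h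
    · exact h (Ideal.mem_span_singleton_self x)
    · exact hmax hx h (Ideal.mem_span_singleton_self x)
  · obtain ⟨a, rfl⟩ := Ideal.mem_span_singleton'.mp hx
    exact hθ (isUnit_of_mul_isUnit_right hu)

variable {θ : A} (hθ : ∀ x : A, ¬IsUnit x ↔ x ∈ Ideal.span {θ})
include hθ

theorem not_isUnit_of_span_eq_nonunits : ¬IsUnit θ :=
  (hθ θ).2 (Ideal.mem_span_singleton_self θ)

theorem exists_eq_mul_of_not_isUnit {x : A} (hx : ¬IsUnit x) : ∃ a, x = a * θ := by
  obtain ⟨a, ha⟩ := Ideal.mem_span_singleton'.mp ((hθ x).1 hx)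
  exact ⟨a, ha.symm⟩

theorem isUnit_one_sub_of_not_isUnit {x : A} (hx : ¬IsUnit x) : IsUnit (1 - x) := by
  by_contra h
  have h1 := Ideal.add_mem _ ((hθ _).1 h) ((hθ _).1 hx)
  rw [sub_add_cancel] at h1
  exact (hθ 1).2 h1 isUnit_one

variable [Finite A]

theorem isNilpotent_of_span_eq_nonunits : IsNilpotent θ := by
  obtain ⟨i, j, hij, hpow⟩ := Finite.exists_ne_map_eq_of_infinite (fun n : ℕ => θ ^ n)
  wlog hlt : i < j generalizing i j
  · exact this j i hij.symm hpow.symm (by omega)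
  -- `θ ^ i = θ ^ (j - i) * θ ^ i` and `1 - θ ^ (j - i)` is a unit
  have hsub : IsUnit (1 - θ ^ (j - i)) := isUnit_one_sub_of_not_isUnit hθ
    (by rw [isUnit_pow_iff (by omega)]; exact not_isUnit_of_span_eq_nonunits hθ)
  refine ⟨i, (hsub.mul_right_eq_zero).mp ?_⟩
  rw [sub_mul, one_mul, ← pow_add, Nat.sub_add_cancel hlt.le]
  exact sub_eq_zero.mpr hpow

theorem exists_isUnit_mul_pow {x : A} (hx : x ≠ 0) : ∃ u k, IsUnit u ∧ x = u * θ ^ k := by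
  obtain ⟨n, hn⟩ := isNilpotent_of_span_eq_nonunits hθ
  obtain ⟨k, ⟨a, rfl⟩, hk⟩ : ∃ k, (∃ a, x = a * θ ^ k) ∧ ¬∃ a, x = a * θ ^ (k + 1) := by
    by_contra! h
    obtain ⟨a, rfl⟩ : ∃ a, x = a * θ ^ n :=
      Nat.rec ⟨x, by simp⟩ (fun k hk => h k hk) n
    simp [hn] at hx
  refine ⟨a, k, ?_, rfl⟩
  by_contra ha
  obtain ⟨c, rfl⟩ := exists_eq_mul_of_not_isUnit hθ ha
  exact hk ⟨c, by rw [pow_succ', mul_assoc]⟩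

theorem exists_theta_mul_eq_mul_theta (b : A) : ∃ a, θ * b = a * θ :=
  exists_eq_mul_of_not_isUnit hθ fun h => not_isUnit_of_span_eq_nonunits hθ
    (isUnit_of_mul_isUnit_left h)

theorem isUnit_of_theta_mul_eq (hθ0 : θ ≠ 0) {v w : A} (hv : IsUnit v) (hw : θ * v = w * θ) :
    IsUnit w := by
  obtain ⟨v, rfl⟩ := hv
  obtain ⟨w', hw'⟩ := exists_theta_mul_eq_mul_theta hθ ↑v⁻¹
  have hfix : θ = w * w' * θ := by
    calc θ = θ * ↑v * ↑v⁻¹ := by rw [mul_assoc, v.mul_inv, mul_one]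
      _ = w * w' * θ := by rw [hw, mul_assoc, hw', mul_assoc]
  by_contra h
  have hunit : IsUnit (1 - w * w') :=
    isUnit_one_sub_of_not_isUnit hθ fun hu => h (isUnit_of_mul_isUnit_left hu)
  exact hθ0 ((hunit.mul_right_eq_zero).mp (by rw [sub_mul, one_mul, ← hfix, sub_self]))

theorem mul_theta_eq_zero_of_theta_mul_eq_zero {r : A} (hr : θ * r = 0) : r * θ = 0 := by
  by_cases hθ0 : θ = 0
  · rw [hθ0, mul_zero]
  by_cases hr0 : r = 0
  · rw [hr0, zero_mul]
  obtain ⟨v, k, hv, rfl⟩ := exists_isUnit_mul_pow hθ hr0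
  obtain ⟨w, hw⟩ := exists_theta_mul_eq_mul_theta hθ v
  have hpow : θ ^ (k + 1) = 0 := by
    rw [← (isUnit_of_theta_mul_eq hθ hθ0 hv hw).mul_right_eq_zero, pow_succ', ← mul_assoc, ← hw,
      mul_assoc, hr]
  rw [mul_assoc, ← pow_succ, hpow, mul_zero]

/-- `θA ⊆ Aθ`, and both have the same size since the right annihilator of `θ` lies in its left
annihilator. -/
theorem exists_mul_theta_eq_theta_mul (a : A) : ∃ b, a * θ = θ * b := by
  let L := AddMonoidHom.mulLeft θ
  let R := AddMonoidHom.mulRight θ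
  have hker : L.ker ≤ R.ker := fun r hr => mul_theta_eq_zero_of_theta_mul_eq_zero hθ hr
  have hrange : L.range ≤ R.range := by
    rintro _ ⟨b, rfl⟩
    obtain ⟨a, ha⟩ := exists_theta_mul_eq_mul_theta hθ b
    exact ⟨a, ha.symm⟩
  have hcard : Nat.card R.range ≤ Nat.card L.range := by
    rw [← AddSubgroup.index_ker, ← AddSubgroup.index_ker]
    exact AddSubgroup.index_antitone hker
  obtain ⟨b, hb⟩ : a * θ ∈ L.range := by
    rw [AddSubgroup.eq_of_le_of_card_ge hrange hcard]
    exact ⟨a, rfl⟩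
  exact ⟨b, hb.symm⟩

theorem exists_mul_pow_eq_pow_mul (k : ℕ) (a : A) : ∃ b, a * θ ^ k = θ ^ k * b := by
  induction k generalizing a with
  | zero => exact ⟨a, by simp⟩
  | succ k ih =>
    obtain ⟨b, hb⟩ := ih a
    obtain ⟨c, hc⟩ := exists_mul_theta_eq_theta_mul hθ b
    exact ⟨c, by rw [pow_succ, ← mul_assoc, hb, mul_assoc, hc, mul_assoc]⟩

theorem exists_mul_pow_eq_mul_pow_mul {u : A} (hu : IsUnit u) (v : A) {k j : ℕ} (hkj : k ≤ j) :
    ∃ b, v * θ ^ j = u * θ ^ k * b := by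
  obtain ⟨u, rfl⟩ := hu
  obtain ⟨b, hb⟩ := exists_mul_pow_eq_pow_mul hθ k (↑u⁻¹ * v * θ ^ (j - k))
  refine ⟨b, ?_⟩
  calc v * θ ^ j = ↑u * (↑u⁻¹ * v * θ ^ (j - k) * θ ^ k) := by
        rw [mul_assoc _ (θ ^ _), ← pow_add, Nat.sub_add_cancel hkj, ← mul_assoc, ← mul_assoc,
          u.mul_inv, one_mul]
    _ = ↑u * θ ^ k * b := by rw [hb, mul_assoc]

omit hθ in
/-- Ideals of `Aᵐᵒᵖ` are the right ideals of `A`. -/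
theorem isPrincipalIdealRing_mulOpposite (hch : ∀ I J : Ideal A, I ≤ J ∨ J ≤ I) :
    IsPrincipalIdealRing Aᵐᵒᵖ := by
  classical
  refine ⟨fun I => ?_⟩
  by_cases hI : I = ⊥
  · rw [hI]; exact bot_isPrincipal
  obtain ⟨x, hxI, hx0⟩ := (Submodule.ne_bot_iff I).mp hI
  have : Nontrivial A := ⟨⟨x.unop, 0, by simpa using hx0⟩⟩
  obtain ⟨θ, hθ⟩ := exists_forall_not_isUnit_iff_mem_span hch
  -- a generator `u * θ ^ k` of `I` with `u` a unit and `k` least possible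
  have hex : ∃ k u, IsUnit u ∧ MulOpposite.op (u * θ ^ k) ∈ I := by
    obtain ⟨u, k, hu, hx⟩ := exists_isUnit_mul_pow hθ (x := x.unop) (by simpa using hx0)
    exact ⟨k, u, hu, by rw [← hx]; exact hxI⟩
  obtain ⟨u, hu, huI⟩ := Nat.find_spec hex
  refine ⟨⟨MulOpposite.op (u * θ ^ Nat.find hex), le_antisymm (fun y hy => ?_)
    ((Ideal.span_singleton_le_iff_mem _).mpr huI)⟩⟩
  induction y using MulOpposite.rec' with | _ y => ?_
  by_cases hy0 : y = 0
  · rw [hy0, MulOpposite.op_zero]; exact Submodule.zero_mem _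
  obtain ⟨v, j, hv, rfl⟩ := exists_isUnit_mul_pow hθ hy0
  obtain ⟨b, hb⟩ := exists_mul_pow_eq_mul_pow_mul hθ hu v (Nat.find_min' hex ⟨v, hv, hy⟩)
  exact Ideal.mem_span_singleton'.mpr ⟨MulOpposite.op b, by rw [hb]; rfl⟩

end ChainRing

section MinGen

open Submodule

variable {R M N : Type*} [Ring R] [AddCommGroup M] [Module R M] [AddCommGroup N] [Module R N]

theorem minGen_le_card_of_span_eq {V : Submodule R M} {s : Finset M} (hs : span R (s : Set M) = V) :
    minGen V ≤ s.card :=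
  Nat.sInf_le ⟨s, rfl, hs⟩

theorem exists_card_eq_minGen [Finite M] (V : Submodule R M) :
    ∃ s : Finset M, s.card = minGen V ∧ span R (s : Set M) = V :=
  Nat.sInf_mem (s := {n | ∃ s : Finset M, s.card = n ∧ span R (s : Set M) = V})
    ⟨_, (Set.toFinite (V : Set M)).toFinset, rfl, by simp⟩

theorem minGen_bot : minGen (⊥ : Submodule R M) = 0 :=
  Nat.eq_zero_of_le_zero (minGen_le_card_of_span_eq (s := ∅) (by simp))

theorem minGen_span_singleton_le (x : M) : minGen (span R {x}) ≤ 1 :=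
  minGen_le_card_of_span_eq (s := {x}) (by simp)

theorem minGen_map_le [Finite M] (f : M →ₗ[R] N) (V : Submodule R M) :
    minGen (V.map f) ≤ minGen V := by
  classical
  obtain ⟨s, hcard, hs⟩ := exists_card_eq_minGen V
  calc minGen (V.map f) ≤ (s.image f).card := minGen_le_card_of_span_eq (by simp [span_image, hs])
    _ ≤ minGen V := hcard ▸ Finset.card_image_le

/-- Generators of `W ∩ ker f` together with lifts of generators of `f(W)` generate `W`. -/
theorem minGen_le_minGen_inf_ker_add_minGen_map [Finite M] [Finite N] (f : M →ₗ[R] N)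
    (W : Submodule R M) : minGen W ≤ minGen (W ⊓ LinearMap.ker f) + minGen (W.map f) := by
  classical
  obtain ⟨s, hs_card, hs⟩ := exists_card_eq_minGen (W ⊓ LinearMap.ker f)
  obtain ⟨u, hu_card, hu⟩ := exists_card_eq_minGen (W.map f)
  have hlift : ∀ y ∈ u, ∃ x ∈ W, f x = y := fun y hy => by
    rw [← mem_map, ← hu]; exact subset_span hy
  choose! l hlW hlf using hlift
  have hT : span R (u.image l : Set M) ≤ W := by
    rw [span_le, Finset.coe_image]; exact Set.image_subset_iff.mpr hlW
  have hfT : (span R (u.image l : Set M)).map f = W.map f := by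
    rw [← span_image, Finset.coe_image, Set.image_image, Set.EqOn.image_eq_self hlf, hu]
  have hspan : span R ((s ∪ u.image l : Finset M) : Set M) = W := by
    rw [Finset.coe_union, span_union, hs]
    refine le_antisymm (sup_le inf_le_left hT) fun y hy => ?_
    obtain ⟨z, hz, hzy⟩ : f y ∈ (span R (u.image l : Set M)).map f :=
      hfT ▸ mem_map_of_mem hy
    have hyz : y - z ∈ W ⊓ LinearMap.ker f :=
      ⟨sub_mem hy (hT hz), by simp [LinearMap.mem_ker, hzy]⟩
    simpa using add_mem (mem_sup_left hyz) (mem_sup_right hz)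
  calc minGen W ≤ (s ∪ u.image l).card := minGen_le_card_of_span_eq hspan
    _ ≤ s.card + (u.image l).card := Finset.card_union_le _ _
    _ ≤ minGen (W ⊓ LinearMap.ker f) + minGen (W.map f) := by
        rw [hs_card, ← hu_card]; exact Nat.add_le_add_left Finset.card_image_le _

variable [IsPrincipalIdealRing R] [Finite R]

theorem minGen_le_card_of_forall_notMem {ι : Type*} [Finite ι] [DecidableEq ι] (J : Finset ι)
    (V : Submodule R (ι → R)) (hV : ∀ x ∈ V, ∀ i ∉ J, x i = 0) : minGen V ≤ J.card := by
  induction J using Finset.induction_on generalizing V with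
  | empty =>
    have hbot : V = ⊥ := (eq_bot_iff).mpr fun x hx => funext fun i => hV x hx i (by simp)
    simp [hbot, minGen_bot]
  | insert a J ha ih =>
    let π := LinearMap.proj (R := R) (φ := fun _ : ι => R) a
    have hker : minGen (V ⊓ LinearMap.ker π) ≤ J.card := ih _ fun x hx i hi => by
      by_cases hia : i = a
      · exact hia ▸ hx.2
      · exact hV x hx.1 i (by simp [hia, hi])
    have hmap : minGen (V.map π) ≤ 1 := by
      rw [← IsPrincipal.span_singleton_generator (V.map π)]; exact minGen_span_singleton_le _
    calc minGen V ≤ minGen (V ⊓ LinearMap.ker π) + minGen (V.map π) :=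
          minGen_le_minGen_inf_ker_add_minGen_map π V
      _ ≤ (insert a J).card := by rw [Finset.card_insert_of_notMem ha]; omega

theorem minGen_pi_le_card {ι : Type*} [Fintype ι] (V : Submodule R (ι → R)) :
    minGen V ≤ Fintype.card ι := by
  classical
  exact minGen_le_card_of_forall_notMem Finset.univ V (by simp)

theorem minGen_mono [Finite M] {V W : Submodule R M} (hVW : V ≤ W) : minGen V ≤ minGen W := by
  obtain ⟨s, hs_card, hs⟩ := exists_card_eq_minGen W
  let f := Fintype.linearCombination R (Subtype.val : s → M)
  have hV : (V.comap f).map f = V := by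
    refine map_comap_eq_self ?_
    rwa [Fintype.range_linearCombination, Subtype.range_coe_subtype, Finset.setOfPred_mem, hs]
  calc minGen V = minGen ((V.comap f).map f) := by rw [hV]
    _ ≤ minGen (V.comap f) := minGen_map_le f _
    _ ≤ minGen W := by simpa [hs_card] using minGen_pi_le_card (V.comap f)

end MinGen

section Delta

open Submodule

variable {A E : Type*} [Ring A]

theorem mem_deltaSub {J : Finset E} {x : E → A} : x ∈ deltaSub A E J ↔ ∀ i ∉ J, x i = 0 := by
  simp [deltaSub, mem_pi]

theorem deltaSub_empty : deltaSub A E ∅ = ⊥ :=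
  eq_bot_iff.mpr fun _ hx => funext fun i => mem_deltaSub.mp hx i (Finset.notMem_empty i)

theorem deltaSub_univ [Fintype E] : deltaSub A E Finset.univ = ⊤ :=
  eq_top_iff.mpr fun _ _ => mem_deltaSub.mpr fun i hi => absurd (Finset.mem_univ i) hi

theorem deltaSub_mono {B D : Finset E} (h : B ⊆ D) : deltaSub A E B ≤ deltaSub A E D :=
  fun _ hx => mem_deltaSub.mpr fun i hi => mem_deltaSub.mp hx i fun hiB => hi (h hiB)

theorem deltaSub_inf_ker_funLeft [DecidableEq E] {B D : Finset E} (h : B ⊆ D) :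
    deltaSub A E D ⊓ LinearMap.ker (LinearMap.funLeft Aᵐᵒᵖ A (Subtype.val : ↥(D \ B) → E)) =
      deltaSub A E B := by
  ext x
  simp only [mem_inf, LinearMap.mem_ker, mem_deltaSub, funext_iff, LinearMap.funLeft_apply,
    Pi.zero_apply, Subtype.forall, Finset.mem_sdiff]
  constructor
  · rintro ⟨hD, hDB⟩ i hiB
    by_cases hiD : i ∈ D
    · exact hDB i ⟨hiD, hiB⟩
    · exact hD i hiD
  · intro hB
    exact ⟨fun i hiD => hB i fun hiB => hiD (h hiB), fun i hi => hB i hi.2⟩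

theorem minGen_top_pi_le_card {ι : Type*} [Fintype ι] :
    minGen (⊤ : Submodule Aᵐᵒᵖ (ι → A)) ≤ Fintype.card ι := by
  classical
  refine (minGen_le_card_of_span_eq (s := Finset.univ.image fun i => Pi.single i 1) ?_).trans
    Finset.card_image_le
  refine eq_top_iff.mpr fun x _ => ?_
  rw [← Finset.univ_sum_single x]
  refine sum_mem fun i _ => ?_
  have hi : Pi.single i (x i) = MulOpposite.op (x i) • (Pi.single i 1 : ι → A) := by
    rw [← Pi.single_smul', MulOpposite.smul_eq_mul_unop, MulOpposite.unop_op, one_mul]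
  rw [hi]
  exact smul_mem _ _ (subset_span (by simp))

end Delta

instance MulOpposite.finite {α : Type*} [Finite α] : Finite αᵐᵒᵖ :=
  .of_equiv α MulOpposite.opEquiv

section LinearCode

variable {A E : Type*} [Ring A] [Finite A] [IsPrincipalIdealRing Aᵐᵒᵖ] [Finite E]
  (C : Submodule Aᵐᵒᵖ (E → A))

theorem minGen_inf_deltaSub_mono {B D : Finset E} (h : B ⊆ D) :
    minGen (C ⊓ deltaSub A E B) ≤ minGen (C ⊓ deltaSub A E D) :=
  minGen_mono (inf_le_inf_left C (deltaSub_mono h))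

theorem minGen_inf_deltaSub_le_add_card [DecidableEq E] {B D : Finset E} (h : B ⊆ D) :
    minGen (C ⊓ deltaSub A E D) ≤ minGen (C ⊓ deltaSub A E B) + (D \ B).card := by
  let f := LinearMap.funLeft Aᵐᵒᵖ A (Subtype.val : ↥(D \ B) → E)
  have hker : C ⊓ deltaSub A E D ⊓ LinearMap.ker f = C ⊓ deltaSub A E B := by
    rw [inf_assoc, deltaSub_inf_ker_funLeft h]
  have hmap : minGen ((C ⊓ deltaSub A E D).map f) ≤ (D \ B).card :=
    calc _ ≤ minGen (⊤ : Submodule Aᵐᵒᵖ (↥(D \ B) → A)) := minGen_mono le_top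
      _ ≤ Fintype.card ↥(D \ B) := minGen_top_pi_le_card
      _ = (D \ B).card := Fintype.card_coe _
  calc _ ≤ minGen (C ⊓ deltaSub A E D ⊓ LinearMap.ker f) + minGen ((C ⊓ deltaSub A E D).map f) :=
        minGen_le_minGen_inf_ker_add_minGen_map f _
    _ ≤ _ := by rw [hker]; exact Nat.add_le_add_left hmap _

end LinearCode

/-- Proposition 7.4: over a finite chain ring `A` (a finite ring whose left
ideals form a chain), for a right linear code `C ⊆ A^E` with `rank C = t`, the
function `f J = rank (C ∩ δ(J))` is a demi-matroid on `E` with `f E = t`. -/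
theorem stmt_19 (A : Type*) [Ring A] [Fintype A]
    (hlocalchain : ∀ I J : Ideal A, I ≤ J ∨ J ≤ I)
    (E : Type*) [Fintype E] [DecidableEq E]
    (C : Submodule Aᵐᵒᵖ (E → A)) (t : ℕ) (ht : minGen C = t)
    (f : Finset E → ℤ)
    (hf : ∀ J : Finset E, f J = minGen (C ⊓ deltaSub A E J)) :
    f ∅ = 0 ∧ f Finset.univ = t ∧
    ∀ B D : Finset E, B ⊆ D →
      (0 ≤ f D - f B ∧ f D - f B ≤ (D.card : ℤ) - B.card) := by
  have : IsPrincipalIdealRing Aᵐᵒᵖ := isPrincipalIdealRing_mulOpposite hlocalchain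
  refine ⟨by rw [hf, deltaSub_empty, inf_bot_eq, minGen_bot, Nat.cast_zero],
    by rw [hf, deltaSub_univ, inf_top_eq, ht], fun B D h => ?_⟩
  have hmono := minGen_inf_deltaSub_mono C h
  have hstep := minGen_inf_deltaSub_le_add_card C h
  rw [Finset.card_sdiff_of_subset h] at hstep
  have hcard := Finset.card_le_card h
  rw [hf B, hf D]
  omega
end
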